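/- arXiv:2005.02915 — 3 statements merged into one kernel-verified Lean document; each statement's English description precedes it below -/
import Mathlib

section
/- Let {X_j} be a sequence of zero-mean ℝ^d-valued random vectors, uniformly bounded in the sup norm, with φ(n₀) < 1/2 for some n₀ ∈ ℕ. Fix a unit vector u₀ ∈ ℝ^d and for a finite set M ⊂ ℕ put S(M) = Σ_{j∈M} X_j · u₀. Fix p > 2 and let C_p be the constant for which |Cov(S(M₁), S(M₂))| ≤ C_p (1+‖S(M₁)‖_{L²})(1+‖S(M₂)‖_{L²})(α(r))^{1−2/p} whenever min M₂ − max M₁ ≥ r. Let r ∈ ℕ be such that Σ_{m=1}^∞ (α(rm))^{1−2/p} < 1/(32 C_p). Then for any integer k ≥ 1 and any finite r-separated blocks M₁ < M₂ < … < M_k (i.e., m_i ≤ m_j − r for all i < j, m_i ∈ M_i, m_j ∈ M_j) such that ‖S(M_i)‖_{L²} ≥ 1 for every i, one has (1/2) Σ_{i=1}^k Var(S(M_i)) ≤ Var(S(M₁ ∪ M₂ ∪ … ∪ M_k)) ≤ (3/2) Σ_{i=1}^k Var(S(M_i)). -/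
/- Write `V_i = Var S(M_i)` and `c_ij = Cov(S(M_i), S(M_j))`, so that
`Var S(M_1 ∪ … ∪ M_k) = ∑_i V_i + ∑_{i ≠ j} c_ij` once the blocks are disjoint.
Blocks `i < j` are `r (j - i)`-separated, and because `‖S(M_i)‖₂ ≥ 1` the covariance
inequality gives `|c_ij| ≤ 2 C_p (V_i + V_j) α(r |i - j|)^(1-2/p)`. Every row of these weights
sums to at most `2 ∑_{m ≥ 1} α(r m)^(1-2/p) < 1 / (16 C_p)`, so the off-diagonal part is at
most `(1/4) ∑_i V_i`. -/

open MeasureTheory ProbabilityTheory Filter Finset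
open scoped NNReal ENNReal

noncomputable section

/-- The σ-algebra generated by `X_0, …, X_j`. -/
def pastSigma {Ω E : Type*} [MeasurableSpace E] (X : ℕ → Ω → E) (j : ℕ) :
    MeasurableSpace Ω :=
  ⨆ i ∈ Set.Iic j, MeasurableSpace.comap (X i) inferInstance

/-- The σ-algebra generated by `X_i, i ≥ j`. -/
def futureSigma {Ω E : Type*} [MeasurableSpace E] (X : ℕ → Ω → E) (j : ℕ) :
    MeasurableSpace Ω :=
  ⨆ i ∈ Set.Ici j, MeasurableSpace.comap (X i) inferInstance

/-- The strong (α) mixing coefficients of the sequence `X`. -/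
def alphaMix {Ω E : Type*} [MeasurableSpace Ω] [MeasurableSpace E]
    (P : Measure Ω) (X : ℕ → Ω → E) (k : ℕ) : ℝ :=
  sSup { r | ∃ j, ∃ A B : Set Ω, MeasurableSet[pastSigma X j] A ∧
    MeasurableSet[futureSigma X (j + k)] B ∧
    r = |(P (A ∩ B)).toReal - (P A).toReal * (P B).toReal| }

/-- The φ-mixing coefficients of the sequence `X`. -/
def phiMix {Ω E : Type*} [MeasurableSpace Ω] [MeasurableSpace E]
    (P : Measure Ω) (X : ℕ → Ω → E) (k : ℕ) : ℝ :=
  sSup { r | ∃ j, ∃ A B : Set Ω, MeasurableSet[pastSigma X j] A ∧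
    MeasurableSet[futureSigma X (j + k)] B ∧ 0 < P A ∧
    r = |(P (A ∩ B)).toReal / (P A).toReal - (P B).toReal| }

/-- Covariance of two real-valued random variables. -/
def covR {Ω : Type*} [MeasurableSpace Ω] (P : Measure Ω) (f g : Ω → ℝ) : ℝ :=
  (∫ ω, f ω * g ω ∂P) - (∫ ω, f ω ∂P) * ∫ ω, g ω ∂P

/-- The L² norm (as a real number) of a real-valued random variable. -/
def l2norm {Ω : Type*} [MeasurableSpace Ω] (P : Measure Ω) (f : Ω → ℝ) : ℝ :=
  (eLpNorm f 2 P).toReal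

open Function

section OffDiagonal

variable {ι : Type*} [Fintype ι] [DecidableEq ι]

lemma sum_sum_erase_abs_le_of_le_mul_add {c e : ι → ι → ℝ} {V : ι → ℝ} {K B : ℝ}
    (hV : ∀ i, 0 ≤ V i) (hK : 0 ≤ K) (he : ∀ i j, e i j = e j i)
    (hrow : ∀ i, ∑ j ∈ univ.erase i, e i j ≤ B)
    (hc : ∀ i j, i ≠ j → |c i j| ≤ K * (V i + V j) * e i j) :
    ∑ i, ∑ j ∈ univ.erase i, |c i j| ≤ 2 * K * B * ∑ i, V i := by
  have hswap : ∑ i, ∑ j ∈ univ.erase i, V j * e i j =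
      ∑ i, ∑ j ∈ univ.erase i, V i * e i j := by
    rw [sum_comm' (t' := univ) (s' := fun j => univ.erase j)]
    · simp_rw [he]
    · intro x y
      simp [eq_comm]
  have hrowV : ∑ i, ∑ j ∈ univ.erase i, V i * e i j ≤ B * ∑ i, V i := by
    rw [mul_sum]
    refine sum_le_sum fun i _ => ?_
    rw [← mul_sum, mul_comm B]
    exact mul_le_mul_of_nonneg_left (hrow i) (hV i)
  calc ∑ i, ∑ j ∈ univ.erase i, |c i j|
      ≤ ∑ i, ∑ j ∈ univ.erase i, K * (V i * e i j + V j * e i j) :=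
        sum_le_sum fun i _ => sum_le_sum fun j hj =>
          (hc i j (ne_of_mem_erase hj).symm).trans_eq (by ring)
    _ = K * (∑ i, ∑ j ∈ univ.erase i, V i * e i j +
          ∑ i, ∑ j ∈ univ.erase i, V j * e i j) := by
        simp only [← mul_sum, sum_add_distrib]
    _ ≤ 2 * K * B * ∑ i, V i := by
        rw [hswap]
        nlinarith [hrowV]

lemma abs_sum_sum_sub_sum_diag_le {c : ι → ι → ℝ} {B : ℝ}
    (hoff : ∑ i, ∑ j ∈ univ.erase i, |c i j| ≤ B) :
    |∑ i, ∑ j, c i j - ∑ i, c i i| ≤ B := by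
  have hsplit : ∑ i, ∑ j, c i j - ∑ i, c i i = ∑ i, ∑ j ∈ univ.erase i, c i j := by
    rw [sub_eq_iff_eq_add', ← sum_add_distrib]
    exact sum_congr rfl fun i _ => (add_sum_erase _ _ (mem_univ i)).symm
  rw [hsplit]
  exact (abs_sum_le_sum_abs _ _).trans
    ((sum_le_sum fun i _ => abs_sum_le_sum_abs _ _).trans hoff)

end OffDiagonal

lemma sum_comp_le_tsum_of_injOn {β : Type*} {a : ℕ → ℝ} (ha : ∀ n, 0 ≤ a n)
    (hs : Summable a) {s : Finset β} {g : β → ℕ} (hg : Set.InjOn g s) :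
    ∑ x ∈ s, a (g x) ≤ ∑' n, a n := by
  rw [← sum_image hg]
  exact hs.sum_le_tsum _ fun n _ => ha n

lemma sum_erase_dist_le_two_mul_tsum {k : ℕ} {a : ℕ → ℝ} (ha : ∀ n, 0 ≤ a n)
    (hs : Summable fun m => a (m + 1)) (i : Fin k) :
    ∑ j ∈ univ.erase i, a ((i : ℕ).dist j) ≤ 2 * ∑' m, a (m + 1) := by
  have hshift : ∀ j ∈ univ.erase i, a ((i : ℕ).dist j) = a ((i : ℕ).dist j - 1 + 1) := by
    intro j hj
    have := Fin.val_ne_of_ne (ne_of_mem_erase hj)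
    unfold Nat.dist
    congr 1
    omega
  rw [sum_congr rfl hshift, ← sum_filter_add_sum_filter_not _ (fun j : Fin k => (i : ℕ) < j),
    two_mul]
  refine add_le_add (sum_comp_le_tsum_of_injOn (fun m => ha _) hs ?_)
    (sum_comp_le_tsum_of_injOn (fun m => ha _) hs ?_) <;>
  · intro x hx y hy hxy
    simp only [coe_filter, mem_erase, mem_univ, Set.mem_ofPred_eq] at hx hy hxy
    have := Fin.val_ne_of_ne hx.1.1
    have := Fin.val_ne_of_ne hy.1.1
    unfold Nat.dist at hxy
    ext
    omega

lemma add_mul_sub_le_of_separated {k r : ℕ} {M : Fin k → Finset ℕ}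
    (hne : ∀ i, (M i).Nonempty)
    (hsep : ∀ i j : Fin k, i < j → ∀ x ∈ M i, ∀ y ∈ M j, x + r ≤ y)
    {i j : Fin k} (hij : i < j) {x y : ℕ} (hx : x ∈ M i) (hy : y ∈ M j) :
    x + r * ((j : ℕ) - i) ≤ y := by
  obtain ⟨n, hn⟩ : ∃ n, (j : ℕ) = i + n + 1 := ⟨j - i - 1, by omega⟩
  induction n generalizing j y with
  | zero =>
    have := hsep i j hij x hx y hy
    rw [hn, show (i : ℕ) + 0 + 1 - i = 1 by omega, mul_one]
    exact this
  | succ n ih =>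
    let j' : Fin k := ⟨i + n + 1, by omega⟩
    obtain ⟨z, hz⟩ := hne j'
    have hxz := ih (j := j') (Fin.lt_def.2 (by simp [j'])) hz rfl
    have hzy := hsep j' j (Fin.lt_def.2 (by simp [j']; omega)) z hz y hy
    rw [show (j : ℕ) - i = ((j' : ℕ) - i) + 1 by simp [j']; omega, mul_add_one]
    omega

lemma pairwise_disjoint_of_separated {k r : ℕ} (hr : 0 < r) {M : Fin k → Finset ℕ}
    (hsep : ∀ i j : Fin k, i < j → ∀ x ∈ M i, ∀ y ∈ M j, x + r ≤ y) :
    Pairwise (Disjoint on M) := by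
  intro i j hij
  refine disjoint_left.2 fun x hxi hxj => ?_
  rcases hij.lt_or_gt with h | h
  · have := hsep i j h x hxi x hxj
    omega
  · have := hsep j i h x hxj x hxi
    omega

lemma alphaMix_nonneg {Ω E : Type*} [MeasurableSpace Ω] [MeasurableSpace E]
    (P : Measure Ω) (X : ℕ → Ω → E) (k : ℕ) : 0 ≤ alphaMix P X k :=
  Real.sSup_nonneg fun _ ⟨_, _, _, _, _, hr⟩ => hr ▸ abs_nonneg _

section Moments

variable {Ω : Type*} [MeasurableSpace Ω] {P : Measure Ω} {f g : Ω → ℝ}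

lemma covR_eq_covariance [IsProbabilityMeasure P] (hf : MemLp f 2 P) (hg : MemLp g 2 P) :
    covR P f g = cov[f, g; P] :=
  (covariance_eq_sub hf hg).symm

lemma variance_eq_l2norm_sq (hf : MemLp f 2 P) (h0 : ∫ ω, f ω ∂P = 0) :
    variance f P = l2norm P f ^ 2 := by
  rw [variance_of_integral_eq_zero hf.aemeasurable h0, l2norm,
    hf.eLpNorm_eq_integral_rpow_norm two_ne_zero ENNReal.ofNat_ne_top,
    ENNReal.toReal_ofReal (by positivity), ← Real.rpow_natCast, ← Real.rpow_mul (by positivity)]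
  norm_num

lemma abs_covariance_le_of_abs_covR_le [IsProbabilityMeasure P] {C t : ℝ} (hC : 0 ≤ C)
    (ht : 0 ≤ t)
    (hf : MemLp f 2 P) (hg : MemLp g 2 P) (hf0 : ∫ ω, f ω ∂P = 0) (hg0 : ∫ ω, g ω ∂P = 0)
    (hf1 : 1 ≤ l2norm P f) (hg1 : 1 ≤ l2norm P g)
    (h : |covR P f g| ≤ C * (1 + l2norm P f) * (1 + l2norm P g) * t) :
    |cov[f, g; P]| ≤ 2 * C * (variance f P + variance g P) * t := by
  rw [← covR_eq_covariance hf hg, variance_eq_l2norm_sq hf hf0, variance_eq_l2norm_sq hg hg0]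
  refine h.trans ?_
  have key : (1 + l2norm P f) * (1 + l2norm P g) ≤ 2 * (l2norm P f ^ 2 + l2norm P g ^ 2) := by
    nlinarith [sq_nonneg (l2norm P f - l2norm P g),
      mul_nonneg (sub_nonneg.2 hf1) (sub_nonneg.2 hg1)]
  calc C * (1 + l2norm P f) * (1 + l2norm P g) * t
      = C * ((1 + l2norm P f) * (1 + l2norm P g)) * t := by ring
    _ ≤ C * (2 * (l2norm P f ^ 2 + l2norm P g ^ 2)) * t := by gcongr
    _ = _ := by ring

end Moments

def blockSum {Ω E : Type*} [NormedAddCommGroup E] [InnerProductSpace ℝ E] (u : E)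
    (X : ℕ → Ω → E) (F : Finset ℕ) : Ω → ℝ :=
  fun ω => ∑ j ∈ F, inner ℝ u (X j ω)

/-- The covariance inequality of Lemma 1, with the mixing rate `α(r)^(1-2/p)` abstracted to
`a r`. -/
def BlockCovarianceBound {Ω E : Type*} [MeasurableSpace Ω] [NormedAddCommGroup E]
    [InnerProductSpace ℝ E] (P : Measure Ω) (u : E) (X : ℕ → Ω → E) (C : ℝ) (a : ℕ → ℝ) :
    Prop :=
  ∀ (r : ℕ) (M₁ M₂ : Finset ℕ), M₁.Nonempty → M₂.Nonempty →
    (∀ i ∈ M₁, ∀ j ∈ M₂, i + r ≤ j) →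
    |covR P (blockSum u X M₁) (blockSum u X M₂)| ≤
      C * (1 + l2norm P (blockSum u X M₁)) * (1 + l2norm P (blockSum u X M₂)) * a r

section BlockSum

variable {Ω E : Type*} [MeasurableSpace Ω] {P : Measure Ω} [IsProbabilityMeasure P]
  [NormedAddCommGroup E] [InnerProductSpace ℝ E] [MeasurableSpace E] [OpensMeasurableSpace E]
  {X : ℕ → Ω → E} {L : ℝ}

lemma memLp_blockSum (hmeas : ∀ n, Measurable (X n)) (hbdd : ∀ n ω, ‖X n ω‖ ≤ L) (u : E)
    (F : Finset ℕ) : MemLp (blockSum u X F) 2 P := by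
  refine memLp_finsetSum (f := fun j ω => inner ℝ u (X j ω)) F fun j _ =>
    MemLp.of_bound (C := ‖u‖ * L)
      ((continuous_const.inner continuous_id).measurable.comp (hmeas j)).aestronglyMeasurable
      (ae_of_all _ fun ω => ?_)
  exact (norm_inner_le_norm u (X j ω)).trans
    (mul_le_mul_of_nonneg_left (hbdd j ω) (norm_nonneg u))

lemma variance_blockSum_eq_zero {u : E} (hmeas : ∀ n, Measurable (X n))
    (hbdd : ∀ n ω, ‖X n ω‖ ≤ L)
    (hcov : ∀ j l, j ≤ l → covR P (blockSum u X {j}) (blockSum u X {l}) = 0)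
    (F : Finset ℕ) : variance (blockSum u X F) P = 0 := by
  have hS : ∀ F, MemLp (blockSum u X F) 2 P := memLp_blockSum hmeas hbdd u
  have hcov' : ∀ j l, cov[blockSum u X {j}, blockSum u X {l}; P] = 0 := by
    intro j l
    rcases le_total j l with h | h
    · rw [← covR_eq_covariance (hS _) (hS _), hcov j l h]
    · rw [covariance_comm, ← covR_eq_covariance (hS _) (hS _), hcov l j h]
  have hsingle : blockSum u X F = fun ω => ∑ j ∈ F, blockSum u X {j} ω := by
    funext ω
    simp [blockSum]
  rw [hsingle, variance_fun_sum' fun j _ => hS {j}]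
  simp [hcov']

variable [CompleteSpace E] [SecondCountableTopology E]

lemma integral_blockSum (hmeas : ∀ n, Measurable (X n)) (hbdd : ∀ n ω, ‖X n ω‖ ≤ L)
    (hzero : ∀ n, ∫ ω, X n ω ∂P = 0) (u : E) (F : Finset ℕ) :
    ∫ ω, blockSum u X F ω ∂P = 0 := by
  have hint : ∀ j, Integrable (X j) P := fun j =>
    (integrable_const L).mono' (hmeas j).aestronglyMeasurable (ae_of_all _ (hbdd j))
  simp only [blockSum]
  rw [integral_finsetSum _ fun j _ => (hint j).const_inner u]
  exact sum_eq_zero fun j _ => by rw [integral_inner (hint j), hzero j, inner_zero_right]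

variable {u : E} {C : ℝ} {a : ℕ → ℝ} {k r : ℕ} {M : Fin k → Finset ℕ}

lemma BlockCovarianceBound.pairwise_disjoint (hmeas : ∀ n, Measurable (X n))
    (hbdd : ∀ n ω, ‖X n ω‖ ≤ L) (hzero : ∀ n, ∫ ω, X n ω ∂P = 0)
    (hcov : BlockCovarianceBound P u X C a) (hsum : Summable fun m => a (r * (m + 1)))
    (hsep : ∀ i j : Fin k, i < j → ∀ x ∈ M i, ∀ y ∈ M j, x + r ≤ y)
    (hl2 : ∀ i, 1 ≤ l2norm P (blockSum u X (M i))) :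
    Pairwise (Disjoint on M) := by
  rcases Nat.eq_zero_or_pos r with rfl | hr
  · -- `a 0` is every term of a convergent series, hence `0`; then all covariances vanish and
    -- `Var S(M_i) = 0`, against `hl2`.
    intro i
    have ha : a 0 = 0 := (summable_const_iff _).1 (by simpa using hsum)
    have hvar := variance_blockSum_eq_zero hmeas hbdd (fun j l hjl => abs_nonpos_iff.1 <|
      (hcov 0 {j} {l} (singleton_nonempty j) (singleton_nonempty l) (by simpa using hjl)).trans_eq
        (by rw [ha, mul_zero])) (M i)
    rw [variance_eq_l2norm_sq (memLp_blockSum hmeas hbdd u _)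
      (integral_blockSum hmeas hbdd hzero u _)] at hvar
    nlinarith [hl2 i]
  · exact pairwise_disjoint_of_separated hr hsep

lemma BlockCovarianceBound.abs_covariance_le (hmeas : ∀ n, Measurable (X n))
    (hbdd : ∀ n ω, ‖X n ω‖ ≤ L) (hzero : ∀ n, ∫ ω, X n ω ∂P = 0)
    (hcov : BlockCovarianceBound P u X C a) (hC : 0 ≤ C) (ha : ∀ n, 0 ≤ a n)
    (hMne : ∀ i, (M i).Nonempty)
    (hsep : ∀ i j : Fin k, i < j → ∀ x ∈ M i, ∀ y ∈ M j, x + r ≤ y)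
    (hl2 : ∀ i, 1 ≤ l2norm P (blockSum u X (M i))) {i j : Fin k} (hij : i ≠ j) :
    |cov[blockSum u X (M i), blockSum u X (M j); P]| ≤
      2 * C * (variance (blockSum u X (M i)) P + variance (blockSum u X (M j)) P) *
        a (r * (i : ℕ).dist j) := by
  wlog h : i < j generalizing i j
  · rw [covariance_comm, add_comm, Nat.dist_comm]
    exact this hij.symm (hij.symm.lt_of_le (not_lt.1 h))
  have hdist : (i : ℕ).dist j = j - i := by
    have := Fin.lt_def.1 h
    unfold Nat.dist
    omega
  have hS := memLp_blockSum (P := P) hmeas hbdd u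
  have hS0 := integral_blockSum hmeas hbdd hzero u
  rw [hdist]
  exact abs_covariance_le_of_abs_covR_le hC (ha _) (hS _) (hS _) (hS0 _) (hS0 _) (hl2 i) (hl2 j)
    (hcov _ (M i) (M j) (hMne i) (hMne j)
      fun x hx y hy => add_mul_sub_le_of_separated hMne hsep h hx hy)

end BlockSum

theorem variance_union_separated_blocks_general
    {Ω : Type*} [MeasurableSpace Ω] (P : Measure Ω) [IsProbabilityMeasure P]
    {d : ℕ} (X : ℕ → Ω → EuclideanSpace ℝ (Fin d))
    (hmeas : ∀ n, Measurable (X n))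
    (hzero : ∀ n, ∫ ω, X n ω ∂P = 0)
    (L : ℝ) (hbdd : ∀ n ω, ‖X n ω‖ ≤ L)
    (u₀ : EuclideanSpace ℝ (Fin d))
    (p : ℝ)
    -- C_p : the constant of the covariance inequality of Lemma 1
    (Cp : ℝ)
    (hCp : ∀ (r : ℕ) (M₁ M₂ : Finset ℕ), M₁.Nonempty → M₂.Nonempty →
      (∀ i ∈ M₁, ∀ j ∈ M₂, i + r ≤ j) →
      |covR P (fun ω => ∑ j ∈ M₁, (inner ℝ u₀ (X j ω) : ℝ))
          (fun ω => ∑ j ∈ M₂, (inner ℝ u₀ (X j ω) : ℝ))| ≤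
        Cp * (1 + l2norm P (fun ω => ∑ j ∈ M₁, (inner ℝ u₀ (X j ω) : ℝ))) *
          (1 + l2norm P (fun ω => ∑ j ∈ M₂, (inner ℝ u₀ (X j ω) : ℝ))) *
          (alphaMix P X r) ^ (1 - 2 / p))
    -- r is chosen so that ∑_{m≥1} α(rm)^{1−2/p} < 1/(32 C_p)
    (r : ℕ)
    (hsum : Summable fun m : ℕ => (alphaMix P X (r * (m + 1))) ^ (1 - 2 / p))
    (hr : (∑' m : ℕ, (alphaMix P X (r * (m + 1))) ^ (1 - 2 / p)) < 1 / (32 * Cp))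
    -- the r-separated blocks M₁ < M₂ < … < M_k
    (k : ℕ) (M : Fin k → Finset ℕ)
    (hMne : ∀ i, (M i).Nonempty)
    (hsep : ∀ i j : Fin k, i < j → ∀ x ∈ M i, ∀ y ∈ M j, x + r ≤ y)
    (hl2 : ∀ i, 1 ≤ l2norm P (fun ω => ∑ j ∈ M i, (inner ℝ u₀ (X j ω) : ℝ))) :
    (1 / 2) * (∑ i : Fin k,
        variance (fun ω => ∑ j ∈ M i, (inner ℝ u₀ (X j ω) : ℝ)) P) ≤
      variance (fun ω => ∑ j ∈ Finset.univ.biUnion M, (inner ℝ u₀ (X j ω) : ℝ)) P ∧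
    variance (fun ω => ∑ j ∈ Finset.univ.biUnion M, (inner ℝ u₀ (X j ω) : ℝ)) P ≤
      (3 / 2) * ∑ i : Fin k,
        variance (fun ω => ∑ j ∈ M i, (inner ℝ u₀ (X j ω) : ℝ)) P := by
  set a : ℕ → ℝ := fun n => alphaMix P X n ^ (1 - 2 / p)
  set A := ∑' m : ℕ, a (r * (m + 1))
  set Y : Fin k → Ω → ℝ := fun i => blockSum u₀ X (M i)
  have hbound : BlockCovarianceBound P u₀ X Cp a := hCp
  have ha : ∀ n, 0 ≤ a n := fun n => Real.rpow_nonneg (alphaMix_nonneg P X n) _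
  have hCp_pos : 0 < Cp := by
    have := one_div_pos.1 ((tsum_nonneg fun m => ha _).trans_lt hr)
    linarith
  have hsmall : 2 * (2 * Cp) * (2 * A) ≤ 1 / 2 := by
    have := (lt_div_iff₀ (by positivity)).1 hr
    linarith
  have hY : ∀ i, MemLp (Y i) 2 P := fun i => memLp_blockSum hmeas hbdd u₀ (M i)
  have hoff := sum_sum_erase_abs_le_of_le_mul_add (fun i => variance_nonneg (Y i) P)
    (by linarith) (fun i j => by rw [Nat.dist_comm])
    (fun i => sum_erase_dist_le_two_mul_tsum (a := fun n => a (r * n)) (fun n => ha _) hsum i)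
    fun i j => hbound.abs_covariance_le hmeas hbdd hzero hCp_pos.le ha hMne hsep hl2
  have hdev := abs_sum_sum_sub_sum_diag_le (hoff.trans
    (mul_le_mul_of_nonneg_right hsmall (sum_nonneg fun i _ => variance_nonneg (Y i) P)))
  rw [sum_congr rfl fun i _ => covariance_self (hY i).aemeasurable] at hdev
  have hunion : variance (fun ω => ∑ j ∈ univ.biUnion M, inner ℝ u₀ (X j ω)) P =
      ∑ i, ∑ j, cov[Y i, Y j; P] := by
    rw [← variance_fun_sum hY]
    congr with ω
    exact sum_biUnion ((hbound.pairwise_disjoint hmeas hbdd hzero hsum hsep hl2).set_pairwise _)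
  change (1 / 2) * ∑ i, variance (Y i) P ≤ _ ∧ _ ≤ (3 / 2) * ∑ i, variance (Y i) P
  rw [hunion]
  constructor <;> linarith [abs_le.1 hdev]

theorem variance_union_separated_blocks
    {Ω : Type*} [MeasurableSpace Ω] (P : Measure Ω) [IsProbabilityMeasure P]
    {d : ℕ} (X : ℕ → Ω → EuclideanSpace ℝ (Fin d))
    (hmeas : ∀ n, Measurable (X n))
    (hzero : ∀ n, ∫ ω, X n ω ∂P = 0)
    (L : ℝ) (hbdd : ∀ n ω, ‖X n ω‖ ≤ L)
    (n₀ : ℕ) (hφ : phiMix P X n₀ < 1 / 2)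
    (u₀ : EuclideanSpace ℝ (Fin d)) (hu₀ : ‖u₀‖ = 1)
    (p : ℝ) (hp : 2 < p)
    -- C_p : the constant of the covariance inequality of Lemma 1
    (Cp : ℝ) (hCp_pos : 0 < Cp)
    (hCp : ∀ (r : ℕ) (M₁ M₂ : Finset ℕ), M₁.Nonempty → M₂.Nonempty →
      (∀ i ∈ M₁, ∀ j ∈ M₂, i + r ≤ j) →
      |covR P (fun ω => ∑ j ∈ M₁, (inner ℝ u₀ (X j ω) : ℝ))
          (fun ω => ∑ j ∈ M₂, (inner ℝ u₀ (X j ω) : ℝ))| ≤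
        Cp * (1 + l2norm P (fun ω => ∑ j ∈ M₁, (inner ℝ u₀ (X j ω) : ℝ))) *
          (1 + l2norm P (fun ω => ∑ j ∈ M₂, (inner ℝ u₀ (X j ω) : ℝ))) *
          (alphaMix P X r) ^ (1 - 2 / p))
    -- r is chosen so that ∑_{m≥1} α(rm)^{1−2/p} < 1/(32 C_p)
    (r : ℕ)
    (hsum : Summable fun m : ℕ => (alphaMix P X (r * (m + 1))) ^ (1 - 2 / p))
    (hr : (∑' m : ℕ, (alphaMix P X (r * (m + 1))) ^ (1 - 2 / p)) < 1 / (32 * Cp))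
    -- the r-separated blocks M₁ < M₂ < … < M_k
    (k : ℕ) (hk : 1 ≤ k) (M : Fin k → Finset ℕ)
    (hMne : ∀ i, (M i).Nonempty)
    (hsep : ∀ i j : Fin k, i < j → ∀ x ∈ M i, ∀ y ∈ M j, x + r ≤ y)
    (hl2 : ∀ i, 1 ≤ l2norm P (fun ω => ∑ j ∈ M i, (inner ℝ u₀ (X j ω) : ℝ))) :
    (1 / 2) * (∑ i : Fin k,
        variance (fun ω => ∑ j ∈ M i, (inner ℝ u₀ (X j ω) : ℝ)) P) ≤
      variance (fun ω => ∑ j ∈ Finset.univ.biUnion M, (inner ℝ u₀ (X j ω) : ℝ)) P ∧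
    variance (fun ω => ∑ j ∈ Finset.univ.biUnion M, (inner ℝ u₀ (X j ω) : ℝ)) P ≤
      (3 / 2) * ∑ i : Fin k,
        variance (fun ω => ∑ j ∈ M i, (inner ℝ u₀ (X j ω) : ℝ)) P :=
  variance_union_separated_blocks_general P X hmeas hzero L hbdd u₀ p Cp hCp r hsum hr k M hMne hsep
    hl2

end
end

section
/- Let {X_j} be a sequence of zero-mean ℝ^d-valued random vectors, uniformly bounded in the sup norm, such that α(n) ≤ C δ^n for some C > 0 and δ ∈ (0,1). Let I₁, I₂, … be consecutive disjoint finite integer intervals covering ℕ (each of length at least 1), set A_j = Σ_{k∈I_j} X_k, and suppose that for some p > 2, sup_n sup_{|u|=1} ‖A_n · u‖_{L^p} < ∞. Then there exist constants C' > 0 and δ' ∈ (0,1) such that for all n, k ≥ 1 and all unit vectors u ∈ ℝ^d, |Cov(A_n · u, A_{n+k} · u)| ≤ C' (δ')^k. -/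
open MeasureTheory ProbabilityTheory Filter Finset
open scoped NNReal ENNReal

noncomputable section

/-! Fix a unit vector `u` and write `Y_i = ⟪u, X_i⟫`, so `|Y_i| ≤ L`. The covariance inequality
`|Cov(f, g)| ≤ 4 ‖f‖_∞ ‖g‖_∞ α(k)`, for `f` measurable with respect to the past up to `i` and `g`
with respect to the future from `i + k`, bounds each `|Cov(Y_i, Y_j)|` by `4 L² C δ^(j - i)`. It is
proved by replacing `f`, and then `g`, by the indicator of the set where the conditional
expectation of the centred other variable is nonnegative, at the cost of a factor `2 ‖f‖_∞`.
Since block `n + k` starts at least `k` steps after block `n` ends, summing `δ^(j - i)` over the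
two blocks gives at most `δ^k / (1 - δ)²`. -/

section Covariance

variable {Ω : Type*} [MeasurableSpace Ω] {P : Measure Ω}

lemma covR_comm (f g : Ω → ℝ) : covR P f g = covR P g f := by
  simp only [covR, mul_comm]

lemma covR_sum_sum {ι κ : Type*} {s : Finset ι} {t : Finset κ} {F : ι → Ω → ℝ}
    {G : κ → Ω → ℝ} (hF : ∀ i ∈ s, Integrable (F i) P) (hG : ∀ j ∈ t, Integrable (G j) P)
    (hFG : ∀ i ∈ s, ∀ j ∈ t, Integrable (fun ω => F i ω * G j ω) P) :
    covR P (fun ω => ∑ i ∈ s, F i ω) (fun ω => ∑ j ∈ t, G j ω) =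
      ∑ i ∈ s, ∑ j ∈ t, covR P (F i) (G j) := by
  have hprod : ∫ ω, (∑ i ∈ s, F i ω) * ∑ j ∈ t, G j ω ∂P =
      ∑ i ∈ s, ∑ j ∈ t, ∫ ω, F i ω * G j ω ∂P := by
    simp_rw [sum_mul_sum]
    rw [integral_finsetSum s fun i hi => integrable_finsetSum t (hFG i hi)]
    exact sum_congr rfl fun i hi => integral_finsetSum t (hFG i hi)
  rw [covR, hprod, integral_finsetSum s hF, integral_finsetSum t hG, sum_mul_sum]
  simp only [covR, sum_sub_distrib]

lemma covR_indicator_one_left [IsFiniteMeasure P] {A : Set Ω} (hA : MeasurableSet A)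
    {g : Ω → ℝ} (hg : Integrable g P) :
    covR P (A.indicator 1) g = ∫ ω in A, (g ω - ∫ x, g x ∂P) ∂P := by
  have hmul : (fun ω => A.indicator (1 : Ω → ℝ) ω * g ω) = A.indicator g := by
    ext ω; by_cases hω : ω ∈ A <;> simp [hω]
  rw [covR, hmul, integral_indicator hA, integral_indicator_one hA,
    integral_sub hg.integrableOn (integrableOn_const (measure_ne_top P A)), setIntegral_const,
    smul_eq_mul]

lemma covR_indicator_one_indicator_one {A B : Set Ω} (hA : MeasurableSet A)
    (hB : MeasurableSet B) :
    covR P (A.indicator 1) (B.indicator 1) = P.real (A ∩ B) - P.real A * P.real B := by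
  have hmul : (fun ω => A.indicator (1 : Ω → ℝ) ω * B.indicator 1 ω) = (A ∩ B).indicator 1 := by
    ext ω; by_cases hωA : ω ∈ A <;> by_cases hωB : ω ∈ B <;> simp [hωA, hωB]
  rw [covR, hmul, integral_indicator_one (hA.inter hB), integral_indicator_one hA,
    integral_indicator_one hB]

lemma integral_abs_eq_two_mul_setIntegral_nonneg {H : Ω → ℝ} (hH : Integrable H P)
    (hA : MeasurableSet {ω | 0 ≤ H ω}) (hH0 : ∫ ω, H ω ∂P = 0) :
    ∫ ω, |H ω| ∂P = 2 * ∫ ω in {ω | 0 ≤ H ω}, H ω ∂P := by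
  have hpos : ∫ ω in {ω | 0 ≤ H ω}, |H ω| ∂P = ∫ ω in {ω | 0 ≤ H ω}, H ω ∂P :=
    setIntegral_congr_fun hA fun ω hω => abs_of_nonneg hω
  have hneg : ∫ ω in {ω | 0 ≤ H ω}ᶜ, |H ω| ∂P = -∫ ω in {ω | 0 ≤ H ω}ᶜ, H ω ∂P := by
    rw [← integral_neg]
    exact setIntegral_congr_fun hA.compl fun ω hω => abs_of_neg (not_le.1 hω)
  have hsplit := integral_add_compl hA hH
  rw [← integral_add_compl hA hH.abs, hpos, hneg]
  linarith

end Covariance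

section CovarianceInequality

variable {Ω : Type*} {m mΩ : MeasurableSpace Ω} {P : Measure Ω}

lemma covR_eq_integral_mul_condExp (hm : m ≤ mΩ) [IsFiniteMeasure P]
    {f g : Ω → ℝ} (hf : StronglyMeasurable[m] f) {M : ℝ} (hfM : ∀ ω, |f ω| ≤ M)
    (hg : Integrable g P) :
    covR P f g = ∫ ω, f ω * P[fun x => g x - ∫ y, g y ∂P | m] ω ∂P := by
  set h : Ω → ℝ := fun x => g x - ∫ y, g y ∂P
  have hfM' : ∀ᵐ ω ∂P, ‖f ω‖ ≤ M := ae_of_all _ hfM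
  have hfint : Integrable f P := .of_bound (hf.mono hm).aestronglyMeasurable M hfM'
  have hh : Integrable h P := hg.sub (integrable_const _)
  calc covR P f g = ∫ ω, (f * h) ω ∂P := by
        rw [covR, ← integral_mul_const, ← integral_sub (hg.bdd_mul
          (hf.mono hm).aestronglyMeasurable hfM') (hfint.mul_const _)]
        simp only [Pi.mul_apply, h, mul_sub]
    _ = ∫ ω, P[f * h | m] ω ∂P := (integral_condExp hm).symm
    _ = ∫ ω, (f * P[h | m]) ω ∂P :=
        integral_congr_ae (condExp_stronglyMeasurable_mul_of_bound hm hf hh M hfM')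

lemma exists_abs_covR_le_two_mul_abs_covR_indicator (hm : m ≤ mΩ)
    [IsProbabilityMeasure P] {f g : Ω → ℝ} (hf : StronglyMeasurable[m] f) {M : ℝ}
    (hfM : ∀ ω, |f ω| ≤ M) (hg : Integrable g P) :
    ∃ A, MeasurableSet[m] A ∧ |covR P f g| ≤ 2 * M * |covR P (A.indicator 1) g| := by
  have hcent : Integrable (fun x => g x - ∫ y, g y ∂P) P := hg.sub (integrable_const _)
  set H := P[fun x => g x - ∫ y, g y ∂P | m]
  have hHint : Integrable H P := integrable_condExp
  have hA : MeasurableSet[m] {ω | 0 ≤ H ω} :=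
    measurableSet_le measurable_const stronglyMeasurable_condExp.measurable
  have hH0 : ∫ ω, H ω ∂P = 0 := by
    rw [integral_condExp hm, integral_sub hg (integrable_const _)]
    simp
  have hM : 0 ≤ M := (abs_nonneg _).trans (hfM (nonempty_of_isProbabilityMeasure P).some)
  refine ⟨_, hA, ?_⟩
  calc |covR P f g| = |∫ ω, f ω * H ω ∂P| := by rw [covR_eq_integral_mul_condExp hm hf hfM hg]
    _ ≤ ∫ ω, M * |H ω| ∂P := by
        rw [← Real.norm_eq_abs]
        refine norm_integral_le_of_norm_le (hHint.abs.const_mul M) (ae_of_all _ fun ω => ?_)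
        rw [Real.norm_eq_abs, abs_mul]
        exact mul_le_mul_of_nonneg_right (hfM ω) (abs_nonneg _)
    _ = 2 * M * ∫ ω in {ω | 0 ≤ H ω}, H ω ∂P := by
        rw [integral_const_mul, integral_abs_eq_two_mul_setIntegral_nonneg hHint (hm _ hA) hH0]
        ring
    _ = 2 * M * covR P ({ω | 0 ≤ H ω}.indicator 1) g := by
        rw [setIntegral_condExp hm hcent hA, covR_indicator_one_left (hm _ hA) hg]
    _ ≤ 2 * M * |covR P ({ω | 0 ≤ H ω}.indicator 1) g| := by gcongr; exact le_abs_self _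

end CovarianceInequality

section Mixing

variable {Ω E : Type*} [MeasurableSpace E] (X : ℕ → Ω → E)

lemma measurable_pastSigma {i j : ℕ} (hij : i ≤ j) : Measurable[pastSigma X j] (X i) :=
  measurable_iff_comap_le.2 <| le_iSup₂
    (f := fun i (_ : i ∈ Set.Iic j) => MeasurableSpace.comap (X i) inferInstance) i hij

lemma measurable_futureSigma {i j : ℕ} (hij : i ≤ j) : Measurable[futureSigma X i] (X j) :=
  measurable_iff_comap_le.2 <| le_iSup₂
    (f := fun j (_ : j ∈ Set.Ici i) => MeasurableSpace.comap (X j) inferInstance) j hij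

variable [mΩ : MeasurableSpace Ω]

lemma pastSigma_le (hmeas : ∀ n, Measurable (X n)) (j : ℕ) : pastSigma X j ≤ mΩ :=
  iSup₂_le fun i _ => measurable_iff_comap_le.1 (hmeas i)

lemma futureSigma_le (hmeas : ∀ n, Measurable (X n)) (j : ℕ) : futureSigma X j ≤ mΩ :=
  iSup₂_le fun i _ => measurable_iff_comap_le.1 (hmeas i)

variable (P : Measure Ω) [IsProbabilityMeasure P]

lemma abs_measureReal_inter_sub_le_alphaMix {j k : ℕ} {A B : Set Ω}
    (hA : MeasurableSet[pastSigma X j] A) (hB : MeasurableSet[futureSigma X (j + k)] B) :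
    |P.real (A ∩ B) - P.real A * P.real B| ≤ alphaMix P X k := by
  refine le_csSup ⟨1, ?_⟩ ⟨j, A, B, hA, hB, rfl⟩
  rintro r ⟨-, A', B', -, -, rfl⟩
  exact (abs_sub_le_of_le_of_le measureReal_nonneg (measureReal_le_one (μ := P))
    (mul_nonneg measureReal_nonneg measureReal_nonneg)
    (mul_le_one₀ (measureReal_le_one (μ := P)) measureReal_nonneg
      (measureReal_le_one (μ := P)))).trans_eq (sub_zero 1)

lemma abs_covR_le_four_mul_alphaMix (hmeas : ∀ n, Measurable (X n)) {i k : ℕ} {f g : Ω → ℝ}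
    (hf : Measurable[pastSigma X i] f) (hg : Measurable[futureSigma X (i + k)] g)
    {Mf Mg : ℝ} (hfM : ∀ ω, |f ω| ≤ Mf) (hgM : ∀ ω, |g ω| ≤ Mg) :
    |covR P f g| ≤ 4 * (Mf * Mg) * alphaMix P X k := by
  have hpast := pastSigma_le X hmeas i
  have hfuture := futureSigma_le X hmeas (i + k)
  have ω₀ := (nonempty_of_isProbabilityMeasure P).some
  have hMf : 0 ≤ Mf := (abs_nonneg _).trans (hfM ω₀)
  have hMg : 0 ≤ Mg := (abs_nonneg _).trans (hgM ω₀)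
  have hgint : Integrable g P :=
    .of_bound (hg.mono hfuture le_rfl).aestronglyMeasurable Mg (ae_of_all _ hgM)
  obtain ⟨A, hA, hfA⟩ := exists_abs_covR_le_two_mul_abs_covR_indicator hpast
    hf.stronglyMeasurable hfM hgint
  have hAint : Integrable (A.indicator (1 : Ω → ℝ)) P :=
    (integrable_const (1 : ℝ)).indicator (hpast _ hA)
  obtain ⟨B, hB, hgB⟩ := exists_abs_covR_le_two_mul_abs_covR_indicator hfuture
    hg.stronglyMeasurable hgM hAint
  have hBA : |covR P (B.indicator 1) (A.indicator 1)| ≤ alphaMix P X k := by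
    rw [covR_indicator_one_indicator_one (hfuture _ hB) (hpast _ hA), Set.inter_comm, mul_comm]
    exact abs_measureReal_inter_sub_le_alphaMix X P hA hB
  calc |covR P f g| ≤ 2 * Mf * |covR P g (A.indicator 1)| := by rwa [covR_comm g]
    _ ≤ 2 * Mf * (2 * Mg * alphaMix P X k) := by gcongr; exact hgB.trans (by gcongr)
    _ = 4 * (Mf * Mg) * alphaMix P X k := by ring

lemma abs_covR_comp_le_alphaMix (hmeas : ∀ n, Measurable (X n)) {φ : E → ℝ}
    (hφ : Measurable φ) {M : ℝ} (hM : ∀ n ω, |φ (X n ω)| ≤ M) {i j : ℕ} (hij : i ≤ j) :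
    |covR P (fun ω => φ (X i ω)) (fun ω => φ (X j ω))| ≤ 4 * (M * M) * alphaMix P X (j - i) :=
  abs_covR_le_four_mul_alphaMix X P hmeas (hφ.comp (measurable_pastSigma X le_rfl))
    (hφ.comp (measurable_futureSigma X (by omega))) (hM i) (hM j)

end Mixing

lemma sum_pow_le_inv_one_sub_of_injOn {ι : Type*} {δ : ℝ} (hδ0 : 0 ≤ δ) (hδ1 : δ < 1)
    {s : Finset ι} {e : ι → ℕ} (he : Set.InjOn e s) :
    ∑ i ∈ s, δ ^ e i ≤ (1 - δ)⁻¹ := by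
  rw [← sum_image he, ← tsum_geometric_of_lt_one hδ0 hδ1]
  exact (summable_geometric_of_lt_one hδ0 hδ1).sum_le_tsum _ fun n _ => pow_nonneg hδ0 n

lemma sum_Icc_sum_Icc_pow_sub_le {δ : ℝ} (hδ0 : 0 ≤ δ) (hδ1 : δ < 1) {a b a' b' k : ℕ}
    (hgap : b + k ≤ a') :
    ∑ i ∈ Icc a b, ∑ j ∈ Icc a' b', δ ^ (j - i) ≤ δ ^ k * (1 - δ)⁻¹ ^ 2 := by
  have hsplit : ∀ i ∈ Icc a b, ∀ j ∈ Icc a' b',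
      δ ^ (j - i) ≤ δ ^ k * (δ ^ (b - i) * δ ^ (j - a')) := by
    intro i hi j hj
    rw [mem_Icc] at hi hj
    calc δ ^ (j - i) = δ ^ (a' - b) * (δ ^ (b - i) * δ ^ (j - a')) := by
          rw [← pow_add, ← pow_add]; congr 1; omega
      _ ≤ δ ^ k * (δ ^ (b - i) * δ ^ (j - a')) :=
          mul_le_mul_of_nonneg_right (pow_le_pow_of_le_one hδ0 hδ1.le (by omega)) (by positivity)
  have hinj₁ : Set.InjOn (fun i => b - i) (Icc a b : Finset ℕ) := by
    intro i hi i' hi' h; simp only [coe_Icc, Set.mem_Icc] at hi hi' h; omega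
  have hinj₂ : Set.InjOn (fun j => j - a') (Icc a' b' : Finset ℕ) := by
    intro j hj j' hj' h; simp only [coe_Icc, Set.mem_Icc] at hj hj' h; omega
  calc ∑ i ∈ Icc a b, ∑ j ∈ Icc a' b', δ ^ (j - i)
      ≤ ∑ i ∈ Icc a b, ∑ j ∈ Icc a' b', δ ^ k * (δ ^ (b - i) * δ ^ (j - a')) :=
        sum_le_sum fun i hi => sum_le_sum fun j hj => hsplit i hi j hj
    _ = δ ^ k * ((∑ i ∈ Icc a b, δ ^ (b - i)) * ∑ j ∈ Icc a' b', δ ^ (j - a')) := by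
        rw [sum_mul_sum, mul_sum]; simp_rw [mul_sum]
    _ ≤ δ ^ k * (1 - δ)⁻¹ ^ 2 := by
        rw [sq]
        refine mul_le_mul_of_nonneg_left (mul_le_mul ?_ ?_ (by positivity) ?_) (by positivity)
        · exact sum_pow_le_inv_one_sub_of_injOn hδ0 hδ1 hinj₁
        · exact sum_pow_le_inv_one_sub_of_injOn hδ0 hδ1 hinj₂
        · exact inv_nonneg.2 (by linarith)

lemma add_le_of_consecutive {a b : ℕ → ℕ} (hab : ∀ j, a j ≤ b j)
    (hconsec : ∀ j, a (j + 1) = b j + 1) (n : ℕ) {k : ℕ} (hk : 1 ≤ k) : b n + k ≤ a (n + k) := by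
  induction k, hk using Nat.le_induction with
  | base => exact (hconsec n).ge
  | succ k _ ih =>
    have := hconsec (n + k)
    have := hab (n + k)
    show b n + (k + 1) ≤ a (n + k + 1)
    omega

lemma abs_covR_sum_Icc_le {Ω E : Type*} [MeasurableSpace Ω] [MeasurableSpace E]
    (P : Measure Ω) [IsProbabilityMeasure P] (X : ℕ → Ω → E) (hmeas : ∀ n, Measurable (X n))
    {φ : E → ℝ} (hφ : Measurable φ) {M : ℝ} (hM : ∀ n ω, |φ (X n ω)| ≤ M) {C δ : ℝ}
    (hC : 0 ≤ C) (hδ0 : 0 ≤ δ) (hδ1 : δ < 1) (hα : ∀ n, alphaMix P X n ≤ C * δ ^ n)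
    {a b a' b' k : ℕ} (hgap : b + k ≤ a') :
    |covR P (fun ω => ∑ i ∈ Icc a b, φ (X i ω)) (fun ω => ∑ j ∈ Icc a' b', φ (X j ω))| ≤
      4 * (M * M) * C * (δ ^ k * (1 - δ)⁻¹ ^ 2) := by
  have hM0 : 0 ≤ M := (abs_nonneg _).trans (hM 0 (nonempty_of_isProbabilityMeasure P).some)
  have hφX : ∀ i, Measurable fun ω => φ (X i ω) := fun i => hφ.comp (hmeas i)
  have hint : ∀ i, Integrable (fun ω => φ (X i ω)) P := fun i =>
    .of_bound (hφX i).aestronglyMeasurable M (ae_of_all _ (hM i))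
  rw [covR_sum_sum (fun i _ => hint i) (fun j _ => hint j) fun i _ j _ =>
    (hint j).bdd_mul (hφX i).aestronglyMeasurable (ae_of_all _ (hM i))]
  calc _ ≤ ∑ i ∈ Icc a b, ∑ j ∈ Icc a' b',
        |covR P (fun ω => φ (X i ω)) (fun ω => φ (X j ω))| :=
        (abs_sum_le_sum_abs _ _).trans (sum_le_sum fun i _ => abs_sum_le_sum_abs _ _)
    _ ≤ ∑ i ∈ Icc a b, ∑ j ∈ Icc a' b', 4 * (M * M) * C * δ ^ (j - i) := by
        refine sum_le_sum fun i hi => sum_le_sum fun j hj => ?_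
        rw [mem_Icc] at hi hj
        calc _ ≤ 4 * (M * M) * alphaMix P X (j - i) :=
              abs_covR_comp_le_alphaMix X P hmeas hφ hM (by omega)
          _ ≤ 4 * (M * M) * C * δ ^ (j - i) := by rw [mul_assoc _ C]; gcongr; exact hα _
    _ = 4 * (M * M) * C * ∑ i ∈ Icc a b, ∑ j ∈ Icc a' b', δ ^ (j - i) := by simp_rw [mul_sum]
    _ ≤ 4 * (M * M) * C * (δ ^ k * (1 - δ)⁻¹ ^ 2) := by
        gcongr; exact sum_Icc_sum_Icc_pow_sub_le hδ0 hδ1 hgap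

theorem cov_block_sums_exponential_decay_general
    {Ω : Type*} [MeasurableSpace Ω] (P : Measure Ω) [IsProbabilityMeasure P]
    {d : ℕ} (X : ℕ → Ω → EuclideanSpace ℝ (Fin d))
    (hmeas : ∀ n, Measurable (X n))
    (L : ℝ) (hL : ∀ n ω, ‖X n ω‖ ≤ L)
    (C : ℝ) (hC : 0 < C) (δ : ℝ) (hδ : δ ∈ Set.Ioo (0 : ℝ) 1)
    (hα : ∀ n, alphaMix P X n ≤ C * δ ^ n)
    -- consecutive disjoint finite integer intervals I_j = {a_j, …, b_j} covering ℕ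
    (a b : ℕ → ℕ) (hab : ∀ j, a j ≤ b j) (hconsec : ∀ j, a (j + 1) = b j + 1) :
    ∃ C' : ℝ, 0 < C' ∧ ∃ δ' : ℝ, δ' ∈ Set.Ioo (0 : ℝ) 1 ∧
      ∀ (n k : ℕ), 1 ≤ k → ∀ u : EuclideanSpace ℝ (Fin d), ‖u‖ = 1 →
        |covR P (fun ω => ∑ i ∈ Finset.Icc (a n) (b n), (inner ℝ u (X i ω) : ℝ))
            (fun ω => ∑ i ∈ Finset.Icc (a (n + k)) (b (n + k)), (inner ℝ u (X i ω) : ℝ))| ≤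
          C' * δ' ^ k := by
  obtain ⟨hδ0, hδ1⟩ := hδ
  have hC' : 0 ≤ 4 * (L * L) * C * (1 - δ)⁻¹ ^ 2 :=
    mul_nonneg (mul_nonneg (mul_nonneg zero_le_four (mul_self_nonneg L)) hC.le) (sq_nonneg _)
  refine ⟨4 * (L * L) * C * (1 - δ)⁻¹ ^ 2 + 1, by linarith, δ, ⟨hδ0, hδ1⟩, ?_⟩
  intro n k hk u hu
  have hinner : ∀ i ω, |inner ℝ u (X i ω)| ≤ L := fun i ω =>
    (abs_real_inner_le_norm u (X i ω)).trans (by rw [hu, one_mul]; exact hL i ω)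
  calc _ ≤ 4 * (L * L) * C * (δ ^ k * (1 - δ)⁻¹ ^ 2) :=
        abs_covR_sum_Icc_le P X hmeas (continuous_const.inner continuous_id).measurable hinner
          hC.le hδ0.le hδ1 hα (add_le_of_consecutive hab hconsec n hk)
    _ ≤ (4 * (L * L) * C * (1 - δ)⁻¹ ^ 2 + 1) * δ ^ k := by
        nlinarith [pow_pos hδ0 k]

theorem cov_block_sums_exponential_decay
    {Ω : Type*} [MeasurableSpace Ω] (P : Measure Ω) [IsProbabilityMeasure P]
    {d : ℕ} (X : ℕ → Ω → EuclideanSpace ℝ (Fin d))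
    (hmeas : ∀ n, Measurable (X n))
    (hzero : ∀ n, ∫ ω, X n ω ∂P = 0)
    (L : ℝ) (hL : ∀ n ω, ‖X n ω‖ ≤ L)
    (C : ℝ) (hC : 0 < C) (δ : ℝ) (hδ : δ ∈ Set.Ioo (0 : ℝ) 1)
    (hα : ∀ n, alphaMix P X n ≤ C * δ ^ n)
    -- consecutive disjoint finite integer intervals I_j = {a_j, …, b_j} covering ℕ
    (a b : ℕ → ℕ) (ha0 : a 0 = 0) (hab : ∀ j, a j ≤ b j) (hconsec : ∀ j, a (j + 1) = b j + 1)
    -- uniform L^p bound on the block sums A_j, for some p > 2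
    (p : ℝ) (hp : 2 < p) (K : ℝ)
    (hLp : ∀ (n : ℕ) (u : EuclideanSpace ℝ (Fin d)), ‖u‖ = 1 →
      eLpNorm (fun ω => ∑ i ∈ Finset.Icc (a n) (b n), (inner ℝ u (X i ω) : ℝ))
          (ENNReal.ofReal p) P ≤ ENNReal.ofReal K) :
    ∃ C' : ℝ, 0 < C' ∧ ∃ δ' : ℝ, δ' ∈ Set.Ioo (0 : ℝ) 1 ∧
      ∀ (n k : ℕ), 1 ≤ k → ∀ u : EuclideanSpace ℝ (Fin d), ‖u‖ = 1 →
        |covR P (fun ω => ∑ i ∈ Finset.Icc (a n) (b n), (inner ℝ u (X i ω) : ℝ))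
            (fun ω => ∑ i ∈ Finset.Icc (a (n + k)) (b (n + k)), (inner ℝ u (X i ω) : ℝ))| ≤
          C' * δ' ^ k :=
  cov_block_sums_exponential_decay_general P X hmeas L hL C hC δ hδ hα a b hab hconsec

end
end

section
/- Let {ξ_j} be a Markov chain with transition operators Q_j g(x) = E[g(ξ_{j+1}) | ξ_j = x], and for each j let ρ_j be the L²-operator norm of the restriction of Q_j to zero-mean square-integrable functions of ξ_{j+1}, i.e., ρ_j = sup{ ‖E[g(ξ_{j+1})|ξ_j]‖_{L²} / ‖g(ξ_{j+1})‖_{L²} : E[g(ξ_{j+1})] = 0, 0 < ‖g(ξ_{j+1})‖_{L²} < ∞ }. Suppose ρ := sup_j ρ_j < 1. Let {f_j} be a uniformly bounded sequence of measurable ℝ^d-valued functions, X_j = f_j(ξ_j), and suppose there exists C ≥ 1 such that for each j the ratio between the largest and smallest eigenvalues of Cov(X_j) is bounded by C. Then Assumption (V) holds: there exist constants C₁, C₂ ≥ 1 such that for any n ≤ m with ‖S_{n,m}‖_{L²} ≥ C₁, where S_{n,m} = Σ_{j=n}^m (X_j − E[X_j]), the ratio between the largest and smallest eigenvalues of Cov(S_{n,m})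 is at most C₂. -/
/-!
Centre the summands, `g_j = ⟪u, X_j⟫ - E⟪u, X_j⟫`, and let
`G_i(x) = E[∑_{j=i}^m g_j(ξ_j) | ξ_i = x]`, so that `G_i = g_i + Q_i G_{i+1}`. In `L²(P)`,
writing `π_i` for the conditional expectation given `ξ_0, …, ξ_i`, the Markov property gives
`g_j(ξ_j) = G_j(ξ_j) - π_j G_{j+1}(ξ_{j+1})`, hence
`∑_{j=n}^m g_j(ξ_j) = G_n(ξ_n) + ∑_{j=n}^{m-1} (1 - π_j) G_{j+1}(ξ_{j+1})`, a sum of orthogonal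
increments. Since `‖π_j G_{j+1}‖ ≤ ρ ‖G_{j+1}‖`, Pythagoras and the triangle inequality make both
`Var (∑ g_j)` and `∑ Var g_j` comparable to `∑ ‖G_j‖²`:
`(1 - ρ²)/4 · ∑ Var g_j ≤ Var (∑ g_j) ≤ (1 - ρ)⁻² ∑ Var g_j`.
So the eigenvalue ratio `C` of the summands passes to the sums with `C₂ = 4C / ((1 - ρ)²(1 - ρ²))`,
for all `n ≤ m` (hence `C₁ = 1`).
-/

open MeasureTheory ProbabilityTheory Finset
open scoped ENNReal

noncomputable section

lemma sum_Ico_norm_sq_succ_le {E : Type*} [SeminormedAddCommGroup E] {G : ℕ → E} {n k : ℕ}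
    (hnk : n ≤ k) (hGk : G k = 0) :
    ∑ j ∈ Ico n k, ‖G (j + 1)‖ ^ 2 ≤ ∑ j ∈ Ico n k, ‖G j‖ ^ 2 := by
  have h := sum_Ico_sub (fun j => ‖G j‖ ^ 2) hnk
  rw [sum_sub_distrib, hGk, norm_zero] at h
  nlinarith [sq_nonneg ‖G n‖]

lemma sum_norm_sub_sq_bounds {E : Type*} [SeminormedAddCommGroup E] {G q : ℕ → E} {r : ℝ}
    (hr0 : 0 ≤ r) (hr1 : r ≤ 1) (hq : ∀ j, ‖q j‖ ≤ r * ‖G (j + 1)‖) {n k : ℕ} (hnk : n ≤ k)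
    (hGk : G k = 0) :
    (1 - r) ^ 2 * ∑ j ∈ Ico n k, ‖G j‖ ^ 2 ≤ ∑ j ∈ Ico n k, ‖G j - q j‖ ^ 2 ∧
      ∑ j ∈ Ico n k, ‖G j - q j‖ ^ 2 ≤ 4 * ∑ j ∈ Ico n k, ‖G j‖ ^ 2 := by
  have hshift := sum_Ico_norm_sq_succ_le hnk hGk
  constructor
  · have hterm : ∀ j, (1 - r) * ‖G j‖ ^ 2 ≤ ‖G j - q j‖ ^ 2 + (1 - r) * r * ‖G (j + 1)‖ ^ 2 := by
      intro j
      have h : ‖G j‖ ≤ ‖G j - q j‖ + r * ‖G (j + 1)‖ :=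
        (norm_le_norm_sub_add (G j) (q j)).trans (add_le_add le_rfl (hq j))
      -- convexity of `t ↦ t²` with weights `1 - r` and `r`
      nlinarith [mul_self_le_mul_self (norm_nonneg _) h, norm_nonneg (G (j + 1)),
        mul_nonneg hr0 (sq_nonneg (‖G j - q j‖ - (1 - r) * ‖G (j + 1)‖))]
    have hsum := sum_le_sum fun j (_ : j ∈ Ico n k) => hterm j
    rw [← mul_sum, sum_add_distrib, ← mul_sum] at hsum
    nlinarith [mul_le_mul_of_nonneg_left hshift (mul_nonneg (sub_nonneg.mpr hr1) hr0)]
  · have hterm : ∀ j, ‖G j - q j‖ ^ 2 ≤ 2 * ‖G j‖ ^ 2 + 2 * ‖G (j + 1)‖ ^ 2 := by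
      intro j
      have h : ‖G j - q j‖ ≤ ‖G j‖ + ‖G (j + 1)‖ :=
        (norm_sub_le _ _).trans (add_le_add le_rfl ((hq j).trans
          (mul_le_of_le_one_left (norm_nonneg _) hr1)))
      nlinarith [mul_self_le_mul_self (norm_nonneg _) h, sq_nonneg (‖G j‖ - ‖G (j + 1)‖)]
    have hsum := sum_le_sum fun j (_ : j ∈ Ico n k) => hterm j
    rw [sum_add_distrib, ← mul_sum, ← mul_sum] at hsum
    linarith

section Hilbert

variable {E : Type*} [NormedAddCommGroup E] [InnerProductSpace ℝ E]

lemma norm_sq_sub_starProjection (K : Submodule ℝ E) [K.HasOrthogonalProjection] (x : E) :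
    ‖x - K.starProjection x‖ ^ 2 = ‖x‖ ^ 2 - ‖K.starProjection x‖ ^ 2 := by
  have horth : inner ℝ (K.starProjection x) (x - K.starProjection x) = 0 := by
    rw [real_inner_comm]
    exact K.starProjection_inner_eq_zero x _ (K.starProjection_apply_mem x)
  have h := norm_add_sq_eq_norm_sq_add_norm_sq_real horth
  rw [add_sub_cancel] at h
  nlinarith [h]

variable {F : ℕ → Submodule ℝ E} [∀ j, (F j).HasOrthogonalProjection] {G : ℕ → E} {r : ℝ}

lemma sum_Ico_sub_starProjection_add_mem (hF : Monotone F) (hG : ∀ j, G j ∈ F j) (n k : ℕ) :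
    ∑ j ∈ Ico n k, (G j - (F j).starProjection (G (j + 1))) + G k ∈ F k := by
  refine add_mem (sum_mem fun j hj => ?_) (hG k)
  have hjk : F j ≤ F k := hF (mem_Ico.mp hj).2.le
  exact sub_mem (hjk (hG j)) (hjk ((F j).starProjection_apply_mem _))

lemma norm_sq_sum_Ico_sub_starProjection_add (hF : Monotone F) (hG : ∀ j, G j ∈ F j)
    {n k : ℕ} (hnk : n ≤ k) :
    ‖∑ j ∈ Ico n k, (G j - (F j).starProjection (G (j + 1))) + G k‖ ^ 2 =
      ‖G n‖ ^ 2 + ∑ j ∈ Ico n k, (‖G (j + 1)‖ ^ 2 - ‖(F j).starProjection (G (j + 1))‖ ^ 2) := by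
  set T : ℕ → E := fun k => ∑ j ∈ Ico n k, (G j - (F j).starProjection (G (j + 1))) + G k
  have hstep : ∀ k, n ≤ k → ‖T (k + 1)‖ ^ 2 - ‖T k‖ ^ 2 =
      ‖G (k + 1)‖ ^ 2 - ‖(F k).starProjection (G (k + 1))‖ ^ 2 := by
    intro k hk
    -- the new increment `G (k + 1) - π_k G (k + 1)` is orthogonal to `F k ∋ T k`
    have hT : T (k + 1) = T k + (G (k + 1) - (F k).starProjection (G (k + 1))) := by
      simp only [T, sum_Ico_succ_top hk]; abel
    have horth : inner ℝ (T k) (G (k + 1) - (F k).starProjection (G (k + 1))) = 0 := by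
      rw [real_inner_comm]
      exact (F k).starProjection_inner_eq_zero _ _ (sum_Ico_sub_starProjection_add_mem hF hG n k)
    rw [hT, sq, sq, norm_add_sq_eq_norm_sq_add_norm_sq_real horth,
      ← norm_sq_sub_starProjection]
    ring
  have := sum_Ico_sub (fun k => ‖T k‖ ^ 2) hnk
  rw [sum_congr rfl fun k hk => hstep k (mem_Ico.mp hk).1] at this
  simp only [T, Ico_self, sum_empty, zero_add] at this
  linarith

lemma norm_sum_sub_starProjection_sq_bounds (hF : Monotone F) (hG : ∀ j, G j ∈ F j)
    (hq : ∀ j, ‖(F j).starProjection (G (j + 1))‖ ≤ r * ‖G (j + 1)‖) {n k : ℕ} (hnk : n ≤ k)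
    (hGk : G k = 0) :
    (1 - r ^ 2) * ∑ j ∈ Ico n k, ‖G j‖ ^ 2 ≤
        ‖∑ j ∈ Ico n k, (G j - (F j).starProjection (G (j + 1)))‖ ^ 2 ∧
      ‖∑ j ∈ Ico n k, (G j - (F j).starProjection (G (j + 1)))‖ ^ 2 ≤ ∑ j ∈ Ico n k, ‖G j‖ ^ 2 := by
  have h := norm_sq_sum_Ico_sub_starProjection_add hF hG hnk
  rw [hGk, add_zero] at h
  have hshift := sum_Ico_sub (fun j => ‖G j‖ ^ 2) hnk
  rw [sum_sub_distrib, hGk, norm_zero, zero_pow two_ne_zero] at hshift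
  have hq2 : ∀ j, ‖(F j).starProjection (G (j + 1))‖ ^ 2 ≤ r ^ 2 * ‖G (j + 1)‖ ^ 2 := fun j => by
    rw [← mul_pow]; exact pow_le_pow_left₀ (norm_nonneg _) (hq j) 2
  have hlow := sum_le_sum fun j (_ : j ∈ Ico n k) => hq2 j
  have hup := sum_nonneg fun j (_ : j ∈ Ico n k) => sq_nonneg ‖(F j).starProjection (G (j + 1))‖
  rw [← mul_sum] at hlow
  rw [sum_sub_distrib (f := fun j => ‖G (j + 1)‖ ^ 2)] at h
  constructor <;> nlinarith [sq_nonneg r, sq_nonneg ‖G n‖]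

theorem norm_sum_sub_starProjection_sq_comparable (hF : Monotone F) (hG : ∀ j, G j ∈ F j)
    (hr0 : 0 ≤ r) (hr1 : r ≤ 1)
    (hq : ∀ j, ‖(F j).starProjection (G (j + 1))‖ ≤ r * ‖G (j + 1)‖) {n k : ℕ} (hnk : n ≤ k)
    (hGk : G k = 0) :
    (1 - r ^ 2) / 4 * ∑ j ∈ Ico n k, ‖G j - (F j).starProjection (G (j + 1))‖ ^ 2 ≤
        ‖∑ j ∈ Ico n k, (G j - (F j).starProjection (G (j + 1)))‖ ^ 2 ∧
      (1 - r) ^ 2 * ‖∑ j ∈ Ico n k, (G j - (F j).starProjection (G (j + 1)))‖ ^ 2 ≤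
        ∑ j ∈ Ico n k, ‖G j - (F j).starProjection (G (j + 1))‖ ^ 2 := by
  obtain ⟨hlow, hup⟩ := norm_sum_sub_starProjection_sq_bounds hF hG hq hnk hGk
  obtain ⟨hlow', hup'⟩ := sum_norm_sub_sq_bounds hr0 hr1 hq hnk hGk
  have h1r : 0 ≤ 1 - r ^ 2 := by nlinarith
  constructor
  · nlinarith [mul_le_mul_of_nonneg_left hup' h1r]
  · nlinarith [mul_le_mul_of_nonneg_left hup (sq_nonneg (1 - r))]

end Hilbert

lemma toLp_finsetSum {α ι E : Type*} [MeasurableSpace α] {μ : Measure α} [NormedAddCommGroup E]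
    {p : ℝ≥0∞} [Fact (1 ≤ p)] {f : ι → α → E} (hf : ∀ i, MemLp (f i) p μ) (s : Finset ι) :
    (memLp_finsetSum s fun i _ => hf i).toLp (fun a => ∑ i ∈ s, f i a) =
      ∑ i ∈ s, (hf i).toLp (f i) := by
  classical
  induction s using Finset.induction_on with
  | empty => exact MemLp.toLp_zero _
  | insert i s hi ih =>
    rw [sum_insert hi, ← ih, ← MemLp.toLp_add]
    exact MemLp.toLp_congr _ _ (ae_of_all _ fun a => sum_insert hi)

lemma norm_toLp_sq {α : Type*} [MeasurableSpace α] {μ : Measure α} {f : α → ℝ}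
    (hf : MemLp f 2 μ) : ‖hf.toLp f‖ ^ 2 = ∫ a, f a ^ 2 ∂μ := by
  rw [← real_inner_self_eq_norm_sq, L2.inner_def]
  exact integral_congr_ae (hf.coeFn_toLp.mono fun a ha => by simp [ha, sq])

lemma lpMeas_mono {α F 𝕜 : Type*} [RCLike 𝕜] [NormedAddCommGroup F] [NormedSpace 𝕜 F]
    {m₁ m₂ m0 : MeasurableSpace α} {p : ℝ≥0∞} {μ : Measure α} (h : m₁ ≤ m₂) :
    lpMeas F 𝕜 m₁ p μ ≤ lpMeas F 𝕜 m₂ p μ := fun _ hf =>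
  (mem_lpMeas_iff_aestronglyMeasurable.mp hf).elim fun g hg =>
    mem_lpMeas_iff_aestronglyMeasurable.mpr ⟨g, hg.1.mono h, hg.2⟩

lemma memLp_comp_of_bound {Ω β : Type*} [MeasurableSpace Ω] [MeasurableSpace β] {μ : Measure Ω}
    [IsFiniteMeasure μ] {Y : Ω → β} {φ : β → ℝ} (hY : Measurable Y) (hφ : Measurable φ)
    (hφb : ∃ c, ∀ y, ‖φ y‖ ≤ c) (p : ℝ≥0∞) : MemLp (fun ω => φ (Y ω)) p μ :=
  hφb.elim fun c hc => .of_bound (hφ.comp hY).aestronglyMeasurable c (ae_of_all _ fun _ => hc _)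

lemma variance_inner_sum_sub_integral {Ω ι E : Type*} {mΩ : MeasurableSpace Ω} {P : Measure Ω}
    [IsProbabilityMeasure P] [NormedAddCommGroup E] [InnerProductSpace ℝ E] {X : ι → Ω → E}
    (hX : ∀ i, AEStronglyMeasurable (X i) P) (s : Finset ι) (w : E) :
    Var[fun ω => inner ℝ w (∑ i ∈ s, (X i ω - ∫ ω', X i ω' ∂P)); P] =
      Var[fun ω => ∑ i ∈ s, inner ℝ w (X i ω); P] := by
  have hmeas : AEStronglyMeasurable (fun ω => ∑ i ∈ s, inner ℝ w (X i ω)) P :=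
    Finset.aestronglyMeasurable_fun_sum _ fun i _ => aestronglyMeasurable_const.inner (hX i)
  simp only [inner_sum, inner_sub_right, sum_sub_distrib]
  exact variance_sub_const hmeas _

section MarkovProperty

/-- Given `m`, the conditional law of `Y` is `κ (X ·)`. -/
def IsConditionalLaw {Ω α β : Type*} [MeasurableSpace α] [MeasurableSpace β]
    {mΩ : MeasurableSpace Ω} (P : Measure Ω) (m : MeasurableSpace Ω) (X : Ω → α) (Y : Ω → β)
    (κ : Kernel α β) : Prop :=
  ∀ B, MeasurableSet B → (P[fun ω => B.indicator (fun _ => (1 : ℝ)) (Y ω) | m]) =ᵐ[P]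
    fun ω => (κ (X ω) B).toReal

variable {Ω α β : Type*} [MeasurableSpace α] [MeasurableSpace β] {m mΩ : MeasurableSpace Ω}
  {P : Measure Ω} [IsProbabilityMeasure P] {X : Ω → α} {Y : Ω → β} {κ : Kernel α β}
  [IsMarkovKernel κ]

lemma map_restrict_eq_comp_of_condExp_indicator (hm : m ≤ mΩ) (hX : Measurable X)
    (hY : Measurable Y)
    (hκ : IsConditionalLaw P m X Y κ)
    {s : Set Ω} (hs : MeasurableSet[m] s) :
    (P.restrict s).map Y = κ ∘ₘ (P.restrict s).map X := by
  have : SigmaFinite (P.trim hm) := (isFiniteMeasure_trim hm).toSigmaFinite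
  ext B hB
  rw [Measure.map_apply hY hB, Measure.bind_apply hB κ.aemeasurable,
    lintegral_map (κ.measurable_coe hB) hX]
  have hreal : ∫ ω in s, (B.indicator (fun _ => (1 : ℝ)) (Y ω)) ∂P =
      ∫ ω in s, (κ (X ω) B).toReal ∂P := by
    rw [← setIntegral_condExp hm ((integrable_const 1).indicator (hY hB)) hs]
    exact setIntegral_congr_ae (hm s hs) ((hκ B hB).mono fun ω hω _ => hω)
  have hind : (fun ω => B.indicator (fun _ => (1 : ℝ)) (Y ω)) = (Y ⁻¹' B).indicator 1 := rfl
  rw [hind, integral_indicator_one (hY hB), integral_toReal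
      (f := fun ω => κ (X ω) B) ((κ.measurable_coe hB).comp hX).aemeasurable
      (ae_of_all _ fun ω => measure_lt_top _ _)] at hreal
  exact (ENNReal.toReal_eq_toReal_iff' (measure_ne_top _ _)
    (setLIntegral_lt_top_of_le_nnreal (measure_ne_top P s)
      ⟨1, fun _ _ => by simpa using prob_le_one⟩).ne).mp hreal

lemma condExp_comp_ae_eq_integral_kernel (hm : m ≤ mΩ) (hX : Measurable[m] X) (hY : Measurable Y)
    (hκ : IsConditionalLaw P m X Y κ)
    {φ : β → ℝ} (hφ : Measurable φ) {c : ℝ} (hφc : ∀ y, ‖φ y‖ ≤ c) :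
    P[fun ω => φ (Y ω) | m] =ᵐ[P] fun ω => ∫ y, φ y ∂κ (X ω) := by
  have : SigmaFinite (P.trim hm) := (isFiniteMeasure_trim hm).toSigmaFinite
  have hX' : Measurable X := hX.mono hm le_rfl
  have hκφ : Measurable fun x => ∫ y, φ y ∂κ x := hφ.stronglyMeasurable.integral_kernel.measurable
  have hκφc : ∀ x, ‖∫ y, φ y ∂κ x‖ ≤ c := fun x =>
    (norm_integral_le_of_norm_le_const (ae_of_all _ hφc)).trans (by simp)
  refine (ae_eq_condExp_of_forall_setIntegral_eq hm
    (.of_bound (hφ.comp hY).aestronglyMeasurable c (ae_of_all _ fun ω => hφc (Y ω)))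
    (fun s _ _ => (Integrable.of_bound (hκφ.comp hX').aestronglyMeasurable c
      (ae_of_all _ fun ω => hκφc (X ω))).integrableOn)
    (fun s hs _ => ?_) (hκφ.comp hX).aestronglyMeasurable).symm
  have hint : Integrable (fun p => φ p.2) ((P.restrict s).map X ⊗ₘ κ) :=
    .of_bound (hφ.comp measurable_snd).aestronglyMeasurable c (ae_of_all _ fun p => hφc p.2)
  calc ∫ ω in s, ∫ y, φ y ∂κ (X ω) ∂P
      = ∫ x, ∫ y, φ y ∂κ x ∂(P.restrict s).map X :=
        (integral_map hX'.aemeasurable hκφ.aestronglyMeasurable).symm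
    _ = ∫ p, φ p.2 ∂((P.restrict s).map X ⊗ₘ κ) := (Measure.integral_compProd hint).symm
    _ = ∫ y, φ y ∂(κ ∘ₘ (P.restrict s).map X) := by
        rw [← Measure.snd_compProd, Measure.snd,
          integral_map measurable_snd.aemeasurable hφ.aestronglyMeasurable]
    _ = ∫ ω in s, φ (Y ω) ∂P := by
        rw [← map_restrict_eq_comp_of_condExp_indicator hm hX' hY hκ hs,
          integral_map hY.aemeasurable hφ.aestronglyMeasurable]

lemma starProjection_lpMeas_toLp_comp_ae_eq [hm : Fact (m ≤ mΩ)] (hX : Measurable[m] X)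
    (hY : Measurable Y)
    (hκ : IsConditionalLaw P m X Y κ)
    {φ : β → ℝ} (hφ : Measurable φ) {c : ℝ} (hφc : ∀ y, ‖φ y‖ ≤ c)
    (hφY : MemLp (fun ω => φ (Y ω)) 2 P) :
    (lpMeas ℝ ℝ m 2 P).starProjection (hφY.toLp _) =ᵐ[P] fun ω => ∫ y, φ y ∂κ (X ω) := by
  -- `condExpL2` is defined as the orthogonal projection onto `lpMeas`
  have hproj : ((lpMeas ℝ ℝ m 2 P).starProjection (hφY.toLp _) : Ω → ℝ) =
      condExpL2 ℝ ℝ hm.out (hφY.toLp _) := rfl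
  rw [hproj]
  exact (hφY.condExpL2_ae_eq_condExp (𝕜 := ℝ) hm.out).trans
    (condExp_comp_ae_eq_integral_kernel hm.out hX hY hκ hφ hφc)

end MarkovProperty

section Corrector

variable {𝒳 : ℕ → Type*} [∀ j, MeasurableSpace (𝒳 j)]

/-- `corrector Q g m i x = E[∑_{j=i}^m g_j(ξ_j) | ξ_i = x]` for a Markov chain with transition
kernels `Q`. -/
def corrector (Q : ∀ j, Kernel (𝒳 j) (𝒳 (j + 1))) (g : ∀ j, 𝒳 j → ℝ) (m : ℕ) :
    ∀ i, 𝒳 i → ℝ :=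
  fun i x => if m < i then 0 else g i x + ∫ y, corrector Q g m (i + 1) y ∂Q i x
termination_by i => m + 1 - i

variable {Q : ∀ j, Kernel (𝒳 j) (𝒳 (j + 1))} {g : ∀ j, 𝒳 j → ℝ} {m i : ℕ}

lemma corrector_of_lt (h : m < i) : corrector Q g m i = 0 := by
  ext x; rw [corrector]; simp [h]

lemma corrector_of_le (h : i ≤ m) (x : 𝒳 i) :
    corrector Q g m i x = g i x + ∫ y, corrector Q g m (i + 1) y ∂Q i x := by
  rw [corrector]; simp [Nat.not_lt.mpr h]

lemma measurable_corrector (hg : ∀ j, Measurable (g j)) (i : ℕ) :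
    Measurable (corrector Q g m i) := by
  by_cases h : m < i
  · rw [corrector_of_lt h]; exact measurable_const
  · have := measurable_corrector hg (i + 1)
    rw [funext (corrector_of_le (Nat.not_lt.mp h))]
    exact (hg i).add this.stronglyMeasurable.integral_kernel.measurable
termination_by m + 1 - i

lemma exists_bound_corrector [∀ j, IsMarkovKernel (Q j)] (hg : ∀ j, ∃ c, ∀ x, ‖g j x‖ ≤ c)
    (i : ℕ) : ∃ c, ∀ x, ‖corrector Q g m i x‖ ≤ c := by
  by_cases h : m < i
  · exact ⟨0, fun x => by simp [corrector_of_lt h]⟩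
  · obtain ⟨c, hc⟩ := hg i
    obtain ⟨c', hc'⟩ := exists_bound_corrector hg (i + 1)
    refine ⟨c + c', fun x => ?_⟩
    rw [corrector_of_le (Nat.not_lt.mp h)]
    exact (norm_add_le _ _).trans (add_le_add (hc x)
      ((norm_integral_le_of_norm_le_const (ae_of_all _ hc')).trans (by simp)))
termination_by m + 1 - i

end Corrector

section Chain

variable {Ω : Type*} {mΩ : MeasurableSpace Ω} {𝒳 : ℕ → Type*} [∀ j, MeasurableSpace (𝒳 j)]
  {ξ : ∀ j, Ω → 𝒳 j}

abbrev pastMeasurableSpace (ξ : ∀ j, Ω → 𝒳 j) (j : ℕ) : MeasurableSpace Ω :=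
  ⨆ i ∈ Set.Iic j, MeasurableSpace.comap (ξ i) inferInstance

lemma pastMeasurableSpace_mono : Monotone (pastMeasurableSpace ξ) := fun _ _ hij =>
  biSup_mono fun _ hi => Set.Iic_subset_Iic.mpr hij hi

lemma pastMeasurableSpace_le (hξ : ∀ j, Measurable (ξ j)) (j : ℕ) :
    pastMeasurableSpace ξ j ≤ mΩ :=
  iSup₂_le fun i _ => (hξ i).comap_le

lemma measurable_pastMeasurableSpace {i j : ℕ} (hij : i ≤ j) :
    Measurable[pastMeasurableSpace ξ j] (ξ i) :=
  Measurable.of_comap_le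
    (le_iSup₂ (f := fun i (_ : i ∈ Set.Iic j) => MeasurableSpace.comap (ξ i) inferInstance) i hij)

abbrev pastL2 (P : Measure Ω) (ξ : ∀ j, Ω → 𝒳 j) (j : ℕ) : Submodule ℝ (Lp ℝ 2 P) :=
  lpMeas ℝ ℝ (pastMeasurableSpace ξ j) 2 P

def HasTransitionKernels (P : Measure Ω) (ξ : ∀ j, Ω → 𝒳 j)
    (Q : ∀ j, Kernel (𝒳 j) (𝒳 (j + 1))) : Prop :=
  ∀ j, IsConditionalLaw P (pastMeasurableSpace ξ j) (ξ j) (ξ (j + 1)) (Q j)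

/-- `ρ_j ≤ r` for every `j`. -/
def IsL2Contracting (P : Measure Ω) (ξ : ∀ j, Ω → 𝒳 j) (Q : ∀ j, Kernel (𝒳 j) (𝒳 (j + 1)))
    (r : ℝ) : Prop :=
  ∀ (j : ℕ) (φ : 𝒳 (j + 1) → ℝ), Measurable φ →
    MemLp (fun ω => φ (ξ (j + 1) ω)) 2 P → (∫ ω, φ (ξ (j + 1) ω) ∂P) = 0 →
    eLpNorm (fun ω => ∫ y, φ y ∂((Q j) (ξ j ω))) 2 P ≤
      ENNReal.ofReal r * eLpNorm (fun ω => φ (ξ (j + 1) ω)) 2 P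

variable {P : Measure Ω} {Q : ∀ j, Kernel (𝒳 j) (𝒳 (j + 1))} {g : ∀ j, 𝒳 j → ℝ} {m : ℕ}

lemma toLp_corrector_mem_lpMeas (hg : ∀ j, Measurable (g j))
    (hG : ∀ i, MemLp (fun ω => corrector Q g m i (ξ i ω)) 2 P) (i : ℕ) :
    (hG i).toLp _ ∈ pastL2 P ξ i :=
  mem_lpMeas_iff_aestronglyMeasurable.mpr ⟨_, ((measurable_corrector hg i).comp
    (measurable_pastMeasurableSpace le_rfl)).stronglyMeasurable, (hG i).coeFn_toLp⟩

variable [IsProbabilityMeasure P] [∀ j, IsMarkovKernel (Q j)]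

lemma integral_corrector_comp_eq_zero (hξ : ∀ j, Measurable (ξ j))
    (hQ : HasTransitionKernels P ξ Q) (hg : ∀ j, Measurable (g j))
    (hgb : ∀ j, ∃ c, ∀ x, ‖g j x‖ ≤ c) (hg0 : ∀ j, ∫ ω, g j (ξ j ω) ∂P = 0) (i : ℕ) :
    ∫ ω, corrector Q g m i (ξ i ω) ∂P = 0 := by
  by_cases h : m < i
  · simp [corrector_of_lt h]
  · obtain ⟨c, hc⟩ := exists_bound_corrector (Q := Q) (m := m) hgb (i + 1)
    have hle := pastMeasurableSpace_le hξ i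
    have hcond := condExp_comp_ae_eq_integral_kernel hle (measurable_pastMeasurableSpace le_rfl)
      (hξ (i + 1)) (hQ i) (measurable_corrector hg (i + 1)) hc
    simp_rw [corrector_of_le (Nat.not_lt.mp h)]
    rw [integral_add ((memLp_comp_of_bound (hξ i) (hg i) (hgb i) 1).integrable le_rfl)
        (integrable_condExp.congr hcond), hg0, ← integral_congr_ae hcond, integral_condExp hle,
      integral_corrector_comp_eq_zero hξ hQ hg hgb hg0 (i + 1), add_zero]
termination_by m + 1 - i

lemma starProjection_toLp_corrector_ae_eq (hξ : ∀ j, Measurable (ξ j))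
    (hQ : HasTransitionKernels P ξ Q) (hg : ∀ j, Measurable (g j))
    (hgb : ∀ j, ∃ c, ∀ x, ‖g j x‖ ≤ c) (hG : ∀ i, MemLp (fun ω => corrector Q g m i (ξ i ω)) 2 P)
    (i : ℕ) [Fact (pastMeasurableSpace ξ i ≤ mΩ)] :
    (pastL2 P ξ i).starProjection ((hG (i + 1)).toLp _) =ᵐ[P]
      fun ω => ∫ y, corrector Q g m (i + 1) y ∂Q i (ξ i ω) :=
  (exists_bound_corrector hgb (i + 1)).elim fun _ hc =>
    starProjection_lpMeas_toLp_comp_ae_eq (measurable_pastMeasurableSpace le_rfl) (hξ (i + 1))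
      (hQ i) (measurable_corrector hg (i + 1)) hc _

lemma norm_starProjection_toLp_corrector_le (hξ : ∀ j, Measurable (ξ j))
    (hQ : HasTransitionKernels P ξ Q) {r : ℝ} (hr0 : 0 ≤ r) (hcontr : IsL2Contracting P ξ Q r)
    (hg : ∀ j, Measurable (g j)) (hgb : ∀ j, ∃ c, ∀ x, ‖g j x‖ ≤ c)
    (hg0 : ∀ j, ∫ ω, g j (ξ j ω) ∂P = 0)
    (hG : ∀ i, MemLp (fun ω => corrector Q g m i (ξ i ω)) 2 P)
    (i : ℕ) [Fact (pastMeasurableSpace ξ i ≤ mΩ)] :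
    ‖(pastL2 P ξ i).starProjection ((hG (i + 1)).toLp _)‖ ≤
      r * ‖(hG (i + 1)).toLp _‖ := by
  rw [Lp.norm_def, Lp.norm_def,
    eLpNorm_congr_ae (starProjection_toLp_corrector_ae_eq hξ hQ hg hgb hG i),
    eLpNorm_congr_ae (hG (i + 1)).coeFn_toLp, ← ENNReal.toReal_ofReal hr0, ← ENNReal.toReal_mul]
  exact ENNReal.toReal_mono (ENNReal.mul_ne_top ENNReal.ofReal_ne_top (hG _).eLpNorm_ne_top)
    (hcontr i _ (measurable_corrector hg _) (hG _)
      (integral_corrector_comp_eq_zero hξ hQ hg hgb hg0 _))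

lemma toLp_corrector_sub_starProjection (hξ : ∀ j, Measurable (ξ j))
    (hQ : HasTransitionKernels P ξ Q) (hg : ∀ j, Measurable (g j))
    (hgb : ∀ j, ∃ c, ∀ x, ‖g j x‖ ≤ c) (hG : ∀ i, MemLp (fun ω => corrector Q g m i (ξ i ω)) 2 P)
    (hgL2 : ∀ i, MemLp (fun ω => g i (ξ i ω)) 2 P) {i : ℕ} (hi : i ≤ m)
    [Fact (pastMeasurableSpace ξ i ≤ mΩ)] :
    (hG i).toLp _ - (pastL2 P ξ i).starProjection ((hG (i + 1)).toLp _) =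
      (hgL2 i).toLp _ := by
  refine Lp.ext ?_
  filter_upwards [Lp.coeFn_sub ((hG i).toLp _) ((pastL2 P ξ i).starProjection
      ((hG (i + 1)).toLp _)), (hG i).coeFn_toLp, (hgL2 i).coeFn_toLp,
    starProjection_toLp_corrector_ae_eq hξ hQ hg hgb hG i] with ω h1 h2 h3 h4
  rw [h1, Pi.sub_apply, h2, h3, h4, corrector_of_le hi, add_sub_cancel_right]

theorem integral_sq_sum_comparable (hξ : ∀ j, Measurable (ξ j)) (hQ : HasTransitionKernels P ξ Q)
    {r : ℝ} (hr0 : 0 ≤ r) (hr1 : r ≤ 1) (hcontr : IsL2Contracting P ξ Q r)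
    (hg : ∀ j, Measurable (g j)) (hgb : ∀ j, ∃ c, ∀ x, ‖g j x‖ ≤ c)
    (hg0 : ∀ j, ∫ ω, g j (ξ j ω) ∂P = 0) {n : ℕ} (hnm : n ≤ m) :
    (1 - r ^ 2) / 4 * ∑ j ∈ Icc n m, ∫ ω, g j (ξ j ω) ^ 2 ∂P ≤
        ∫ ω, (∑ j ∈ Icc n m, g j (ξ j ω)) ^ 2 ∂P ∧
      (1 - r) ^ 2 * ∫ ω, (∑ j ∈ Icc n m, g j (ξ j ω)) ^ 2 ∂P ≤
        ∑ j ∈ Icc n m, ∫ ω, g j (ξ j ω) ^ 2 ∂P := by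
  have (i : ℕ) : Fact (pastMeasurableSpace ξ i ≤ mΩ) := ⟨pastMeasurableSpace_le hξ i⟩
  have hG i := memLp_comp_of_bound (μ := P) (hξ i) (measurable_corrector (Q := Q) (m := m) hg i)
    (exists_bound_corrector hgb i) 2
  have hgL2 i := memLp_comp_of_bound (μ := P) (hξ i) (hg i) (hgb i) 2
  have hGtop : (hG (m + 1)).toLp _ = 0 := by
    refine Lp.eq_zero_iff_ae_eq_zero.mpr ((hG (m + 1)).coeFn_toLp.mono fun ω hω => ?_)
    rw [hω, corrector_of_lt (Nat.lt_succ_self m)]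
    rfl
  have hdiff i (hi : i ∈ Ico n (m + 1)) :=
    toLp_corrector_sub_starProjection hξ hQ hg hgb hG hgL2 (Nat.lt_succ_iff.mp (mem_Ico.mp hi).2)
  obtain ⟨hlow, hup⟩ := norm_sum_sub_starProjection_sq_comparable
    (F := pastL2 P ξ) (fun i j hij => lpMeas_mono (pastMeasurableSpace_mono hij))
    (toLp_corrector_mem_lpMeas hg hG)
    hr0 hr1 (fun i => norm_starProjection_toLp_corrector_le hξ hQ hr0 hcontr hg hgb hg0 hG i)
    (by omega : n ≤ m + 1) hGtop
  have hsq : ∑ i ∈ Ico n (m + 1), ‖(hG i).toLp _ -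
      (pastL2 P ξ i).starProjection ((hG (i + 1)).toLp _)‖ ^ 2 =
        ∑ i ∈ Icc n m, ∫ ω, g i (ξ i ω) ^ 2 ∂P := by
    rw [← Ico_add_one_right_eq_Icc]
    exact sum_congr rfl fun i hi => by rw [hdiff i hi, norm_toLp_sq]
  rw [hsq, sum_congr rfl hdiff, ← toLp_finsetSum, norm_toLp_sq, Ico_add_one_right_eq_Icc]
    at hlow hup
  exact ⟨hlow, hup⟩

theorem variance_sum_comparable (hξ : ∀ j, Measurable (ξ j)) (hQ : HasTransitionKernels P ξ Q)
    {r : ℝ} (hr0 : 0 ≤ r) (hr1 : r ≤ 1) (hcontr : IsL2Contracting P ξ Q r)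
    {h : ∀ j, 𝒳 j → ℝ} (hh : ∀ j, Measurable (h j)) (hhb : ∀ j, ∃ c, ∀ x, ‖h j x‖ ≤ c)
    {n : ℕ} (hnm : n ≤ m) :
    (1 - r ^ 2) / 4 * ∑ j ∈ Icc n m, Var[fun ω => h j (ξ j ω); P] ≤
        Var[fun ω => ∑ j ∈ Icc n m, h j (ξ j ω); P] ∧
      (1 - r) ^ 2 * Var[fun ω => ∑ j ∈ Icc n m, h j (ξ j ω); P] ≤
        ∑ j ∈ Icc n m, Var[fun ω => h j (ξ j ω); P] := by
  have hint j : Integrable (fun ω => h j (ξ j ω)) P :=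
    (memLp_comp_of_bound (hξ j) (hh j) (hhb j) 1).integrable le_rfl
  set g : ∀ j, 𝒳 j → ℝ := fun j x => h j x - ∫ ω, h j (ξ j ω) ∂P
  have hvar j : Var[fun ω => h j (ξ j ω); P] = ∫ ω, g j (ξ j ω) ^ 2 ∂P :=
    variance_eq_integral ((hh j).comp (hξ j)).aemeasurable
  have hvar_sum : Var[fun ω => ∑ j ∈ Icc n m, h j (ξ j ω); P] =
      ∫ ω, (∑ j ∈ Icc n m, g j (ξ j ω)) ^ 2 ∂P := by
    rw [variance_eq_integral (Finset.measurable_sum (f := fun j ω => h j (ξ j ω)) _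
        fun j _ => (hh j).comp (hξ j)).aemeasurable,
      integral_finsetSum _ fun j _ => hint j]
    simp only [g, sum_sub_distrib]
  have hg0 j : ∫ ω, g j (ξ j ω) ∂P = 0 := by
    rw [integral_sub (hint j) (integrable_const _), integral_const, probReal_univ, one_smul,
      sub_self]
  simp only [hvar, hvar_sum]
  exact integral_sq_sum_comparable hξ hQ hr0 hr1 hcontr (fun j => (hh j).sub measurable_const)
    (fun j => (hhb j).elim fun c hc => ⟨c + ‖∫ ω, h j (ξ j ω) ∂P‖, fun x =>
      (norm_sub_le _ _).trans (add_le_add_left (hc x) _)⟩) hg0 hnm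

theorem variance_sum_le_mul_variance_sum (hξ : ∀ j, Measurable (ξ j))
    (hQ : HasTransitionKernels P ξ Q) {r : ℝ} (hr0 : 0 ≤ r) (hr1 : r < 1)
    (hcontr : IsL2Contracting P ξ Q r) {h h' : ∀ j, 𝒳 j → ℝ} (hh : ∀ j, Measurable (h j))
    (hhb : ∀ j, ∃ c, ∀ x, ‖h j x‖ ≤ c) (hh' : ∀ j, Measurable (h' j))
    (hh'b : ∀ j, ∃ c, ∀ x, ‖h' j x‖ ≤ c) {C : ℝ} (hC : 0 ≤ C)
    (hvar : ∀ j, Var[fun ω => h j (ξ j ω); P] ≤ C * Var[fun ω => h' j (ξ j ω); P])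
    {n : ℕ} (hnm : n ≤ m) :
    Var[fun ω => ∑ j ∈ Icc n m, h j (ξ j ω); P] ≤
      4 * C / ((1 - r) ^ 2 * (1 - r ^ 2)) * Var[fun ω => ∑ j ∈ Icc n m, h' j (ξ j ω); P] := by
  obtain ⟨-, hup⟩ := variance_sum_comparable hξ hQ hr0 hr1.le hcontr hh hhb hnm
  obtain ⟨hlow, -⟩ := variance_sum_comparable hξ hQ hr0 hr1.le hcontr hh' hh'b hnm
  have hsum : ∑ j ∈ Icc n m, Var[fun ω => h j (ξ j ω); P] ≤
      C * ∑ j ∈ Icc n m, Var[fun ω => h' j (ξ j ω); P] := by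
    rw [mul_sum]; exact sum_le_sum fun j _ => hvar j
  have h1r : 0 < 1 - r ^ 2 := by nlinarith
  calc Var[fun ω => ∑ j ∈ Icc n m, h j (ξ j ω); P]
      ≤ (∑ j ∈ Icc n m, Var[fun ω => h j (ξ j ω); P]) / (1 - r) ^ 2 :=
        (le_div_iff₀ (by nlinarith)).mpr (by linarith)
    _ ≤ C * (4 * Var[fun ω => ∑ j ∈ Icc n m, h' j (ξ j ω); P] / (1 - r ^ 2)) / (1 - r) ^ 2 := by
        gcongr
        exact hsum.trans (mul_le_mul_of_nonneg_left ((le_div_iff₀ h1r).mpr (by linarith)) hC)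
    _ = _ := by field_simp

end Chain

theorem assumptionV_rho_contracting_chain
    {Ω : Type*} [MeasurableSpace Ω] (P : Measure Ω) [IsProbabilityMeasure P]
    {𝒳 : ℕ → Type*} [∀ j, MeasurableSpace (𝒳 j)]
    -- the Markov chain and its one-step transition kernels
    (ξ : ∀ j, Ω → 𝒳 j) (hξ : ∀ j, Measurable (ξ j))
    (Q : ∀ j, Kernel (𝒳 j) (𝒳 (j + 1)))
    (hQmk : ∀ j, IsMarkovKernel (Q j))
    -- Markov property: Q_j is the conditional law of ξ_{j+1} given ξ_0, …, ξ_j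
    (hMarkov : ∀ (j : ℕ) (B : Set (𝒳 (j + 1))), MeasurableSet B →
      (P[fun ω => B.indicator (fun _ => (1 : ℝ)) (ξ (j + 1) ω) |
          ⨆ i ∈ Set.Iic j, MeasurableSpace.comap (ξ i) inferInstance]) =ᵐ[P]
        fun ω => ((Q j) (ξ j ω) B).toReal)
    -- L² contraction: ρ = sup_j ρ_j < 1, where ρ_j is the L²-operator norm of Q_j
    -- restricted to zero-mean square-integrable functions of ξ_{j+1}
    (ρ : ℝ) (hρ : ρ < 1)
    (hcontr : ∀ (j : ℕ) (g : 𝒳 (j + 1) → ℝ), Measurable g →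
      MemLp (fun ω => g (ξ (j + 1) ω)) 2 P →
      (∫ ω, g (ξ (j + 1) ω) ∂P) = 0 →
      eLpNorm (fun ω => ∫ y, g y ∂((Q j) (ξ j ω))) 2 P ≤
        ENNReal.ofReal ρ * eLpNorm (fun ω => g (ξ (j + 1) ω)) 2 P)
    -- the uniformly bounded functionals X_j = f_j(ξ_j)
    {d : ℕ} (f : ∀ j, 𝒳 j → EuclideanSpace ℝ (Fin d))
    (hf : ∀ j, Measurable (f j))
    (K : ℝ) (hK : ∀ j x, ‖f j x‖ ≤ K)
    -- bounded eigenvalue ratio of Cov(X_j)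
    (C : ℝ) (hC : 1 ≤ C)
    (hEig : ∀ (j : ℕ) (u v : EuclideanSpace ℝ (Fin d)), ‖u‖ = 1 → ‖v‖ = 1 →
      variance (fun ω => (inner ℝ u (f j (ξ j ω)) : ℝ)) P ≤
        C * variance (fun ω => (inner ℝ v (f j (ξ j ω)) : ℝ)) P) :
    -- Assumption (V) for the sums S_{n,m} = ∑_{j=n}^m (X_j − E[X_j])
    ∃ C₁ C₂ : ℝ, 1 ≤ C₁ ∧ 1 ≤ C₂ ∧
      ∀ n m : ℕ, n ≤ m →
        ENNReal.ofReal C₁ ≤ eLpNorm (fun ω => ∑ j ∈ Finset.Icc n m,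
            (f j (ξ j ω) - ∫ ω', f j (ξ j ω') ∂P)) 2 P →
        ∀ u v : EuclideanSpace ℝ (Fin d), ‖u‖ = 1 → ‖v‖ = 1 →
          variance (fun ω => (inner ℝ u (∑ j ∈ Finset.Icc n m,
              (f j (ξ j ω) - ∫ ω', f j (ξ j ω') ∂P)) : ℝ)) P ≤
            C₂ * variance (fun ω => (inner ℝ v (∑ j ∈ Finset.Icc n m,
              (f j (ξ j ω) - ∫ ω', f j (ξ j ω') ∂P)) : ℝ)) P := by
  set r := max ρ 0
  have hr0 : 0 ≤ r := le_max_right ρ 0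
  have hr1 : r < 1 := max_lt hρ one_pos
  have hcontr' : IsL2Contracting P ξ Q r := fun j φ hφ hφL2 hφ0 => (hcontr j φ hφ hφL2 hφ0).trans
    (mul_le_mul_left (ENNReal.ofReal_le_ofReal (le_max_left ρ 0)) _)
  have hpos : 0 < (1 - r) ^ 2 * (1 - r ^ 2) := mul_pos (pow_pos (by linarith) 2) (by nlinarith)
  refine ⟨1, 4 * C / ((1 - r) ^ 2 * (1 - r ^ 2)), le_rfl, ?_, ?_⟩
  · rw [le_div_iff₀ hpos]
    nlinarith
  intro n m hnm _ u v hu hv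
  have hmeas (w : EuclideanSpace ℝ (Fin d)) j : Measurable fun x => inner ℝ w (f j x) :=
    measurable_const.inner (hf j)
  have hbdd (w : EuclideanSpace ℝ (Fin d)) j : ∃ c, ∀ x, ‖inner ℝ w (f j x)‖ ≤ c :=
    ⟨‖w‖ * K, fun x => (norm_inner_le_norm _ _).trans
      (mul_le_mul_of_nonneg_left (hK j x) (norm_nonneg w))⟩
  have hX j : AEStronglyMeasurable (fun ω => f j (ξ j ω)) P :=
    ((hf j).comp (hξ j)).aestronglyMeasurable
  rw [variance_inner_sum_sub_integral hX, variance_inner_sum_sub_integral hX]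
  exact variance_sum_le_mul_variance_sum hξ hMarkov hr0 hr1 hcontr' (hmeas u) (hbdd u) (hmeas v)
    (hbdd v) (by linarith) (fun j => hEig j u v hu hv) hnm

end
end
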